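/- arXiv:2307.06685 — 4 statements merged into one kernel-verified Lean document; each statement's English description precedes it below -/
import Mathlib

section
/- Let q ≥ 2 be an integer and let X be a random variable with values in [0,1) whose law is absolutely continuous with density f concentrated on (0,1). Then d_TV(P_n, μ) → 0 as n → ∞, where P_n is the law of T^n(X). -/
open MeasureTheory Set Filter

/-- The base-`q` map `T(x) = q·x − ⌊q·x⌋`. -/
noncomputable def T (q : ℕ) : ℝ → ℝ := fun x => Int.fract ((q : ℝ) * x)

/-- Total variation distance `d_TV(ν₁,ν₂) = sup_{Borel A} |ν₁(A) − ν₂(A)|`. -/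
noncomputable def dTV (ν₁ ν₂ : Measure ℝ) : ℝ :=
  ⨆ A : {A : Set ℝ // MeasurableSet A}, |(ν₁ A.1).toReal - (ν₂ A.1).toReal|

/-! For `n ≥ 1` we have `T^n x = fract (q^n x)` for every real `x`, so it suffices to show that
`fract (N X)` becomes uniform in total variation as `N → ∞`. On a grid cell `{⌊N x⌋ = k}` the map
`x ↦ fract (N x)` is an affine bijection onto `[0,1)` with slope `N`, so a density that is a
function of `⌊N x⌋` alone is transported exactly to (its mass) × uniform. Approximating `f` in `L¹`
by a continuous compactly supported `g`, and `g` by the grid function `x ↦ g (⌊N x⌋ / N)`, bounds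
`d_TV (P_n, μ)` by twice the `L¹` distance from `f` to that grid function, which tends to `0`. -/

lemma comp_eq_sum_indicator {X ι : Type*} {φ : X → ι} {s : Finset ι} {a : ι → ℝ}
    (hs : ∀ i ∉ s, a i = 0) (x : X) :
    a (φ x) = ∑ i ∈ s, (φ ⁻¹' {i}).indicator (fun _ => a i) x := by
  classical
  rw [Finset.sum_eq_single (φ x)]
  · exact (indicator_of_mem rfl _).symm
  · exact fun i _ hi => indicator_of_notMem (fun h => hi h.symm) _
  · exact fun h => by simp [hs _ h]

section FiniteValued

variable {X ι : Type*} [MeasurableSpace X] [MeasurableSpace ι] [MeasurableSingletonClass ι]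
  {μ : Measure X} {φ : X → ι} {s : Finset ι} {a : ι → ℝ}

lemma integrable_indicator_fiber (hφ : Measurable φ) {i : ι} (hi : μ (φ ⁻¹' {i}) ≠ ⊤) (c : ℝ) :
    Integrable ((φ ⁻¹' {i}).indicator fun _ => c) μ :=
  (integrable_indicator_iff (hφ (measurableSet_singleton i))).2 (integrableOn_const hi)

lemma integrable_comp_of_finite_support (hφ : Measurable φ) (hs : ∀ i ∉ s, a i = 0)
    (hfin : ∀ i ∈ s, μ (φ ⁻¹' {i}) ≠ ⊤) : Integrable (fun x => a (φ x)) μ := by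
  simp only [comp_eq_sum_indicator hs]
  exact integrable_finsetSum _ fun i hi => integrable_indicator_fiber hφ (hfin i hi) _

lemma integral_comp_of_finite_support (hφ : Measurable φ) (hs : ∀ i ∉ s, a i = 0)
    (hfin : ∀ i ∈ s, μ (φ ⁻¹' {i}) ≠ ⊤) :
    ∫ x, a (φ x) ∂μ = ∑ i ∈ s, a i * μ.real (φ ⁻¹' {i}) := by
  simp only [comp_eq_sum_indicator hs]
  rw [integral_finsetSum _ fun i hi => integrable_indicator_fiber hφ (hfin i hi) _]
  refine Finset.sum_congr rfl fun i _ => ?_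
  rw [integral_indicator_const _ (hφ (measurableSet_singleton i)), smul_eq_mul, mul_comm]

end FiniteValued

lemma floor_eq_and_fract_mem_iff {x : ℝ} {k : ℤ} {A : Set ℝ} :
    ⌊x⌋ = k ∧ Int.fract x ∈ A ↔ x - k ∈ A ∩ Ico 0 1 := by
  constructor
  · rintro ⟨rfl, hA⟩
    exact ⟨hA, Int.fract_nonneg x, Int.fract_lt_one x⟩
  · rintro ⟨hA, h₀, h₁⟩
    have hk : ⌊x⌋ = k := Int.floor_eq_iff.2 ⟨by linarith, by linarith⟩
    exact ⟨hk, by rwa [Int.fract, hk]⟩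

theorem volume_floor_mul_eq_inter_fract_mul_mem {N : ℕ} (hN : 0 < N) (k : ℤ) (A : Set ℝ) :
    volume ({x : ℝ | ⌊(N : ℝ) * x⌋ = k} ∩ {x | Int.fract ((N : ℝ) * x) ∈ A}) =
      volume (A ∩ Ico 0 1) / N := by
  have hset : {x : ℝ | ⌊(N : ℝ) * x⌋ = k} ∩ {x | Int.fract ((N : ℝ) * x) ∈ A} =
      (fun x => (N : ℝ) * x) ⁻¹' ((fun y => y + -(k : ℝ)) ⁻¹' (A ∩ Ico 0 1)) := by
    ext x
    simp only [mem_inter_iff, mem_preimage, ← sub_eq_add_neg]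
    exact floor_eq_and_fract_mem_iff
  rw [hset, Real.volume_preimage_mul_left (by positivity), measure_preimage_add_right,
    abs_of_pos (by positivity), ENNReal.ofReal_inv_of_pos (by positivity), ENNReal.ofReal_natCast,
    ENNReal.div_eq_inv_mul]

lemma measurable_floor_mul (N : ℕ) : Measurable fun x : ℝ => ⌊(N : ℝ) * x⌋ :=
  (measurable_const_mul _).floor

lemma measurableSet_fract_mul_mem (N : ℕ) {A : Set ℝ} (hA : MeasurableSet A) :
    MeasurableSet {x : ℝ | Int.fract ((N : ℝ) * x) ∈ A} :=
  (measurable_const_mul _).fract hA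

section FloorStep

variable {N : ℕ} {s : Finset ℤ} {a : ℤ → ℝ}

lemma restrict_fract_mul_mem_floor_mul_fiber (hN : 0 < N) {A : Set ℝ} (hA : MeasurableSet A)
    (k : ℤ) :
    volume.restrict {x | Int.fract ((N : ℝ) * x) ∈ A} ((fun x : ℝ => ⌊(N : ℝ) * x⌋) ⁻¹' {k}) =
      volume (A ∩ Ico 0 1) / N := by
  rw [Measure.restrict_apply' (measurableSet_fract_mul_mem N hA)]
  exact volume_floor_mul_eq_inter_fract_mul_mem hN k A

lemma restrict_fract_mul_mem_floor_mul_fiber_ne_top (hN : 0 < N) {A : Set ℝ}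
    (hA : MeasurableSet A) (k : ℤ) :
    volume.restrict {x | Int.fract ((N : ℝ) * x) ∈ A} ((fun x : ℝ => ⌊(N : ℝ) * x⌋) ⁻¹' {k}) ≠
      ⊤ := by
  rw [restrict_fract_mul_mem_floor_mul_fiber hN hA]
  exact ENNReal.div_ne_top (measure_ne_top_of_subset inter_subset_right (by simp))
    (by simp [hN.ne'])

lemma integrable_comp_floor_mul (hN : 0 < N) (hs : ∀ k ∉ s, a k = 0) :
    Integrable fun x : ℝ => a ⌊(N : ℝ) * x⌋ := by
  simpa using integrable_comp_of_finite_support (measurable_floor_mul N) hs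
    fun k _ => restrict_fract_mul_mem_floor_mul_fiber_ne_top hN MeasurableSet.univ k

theorem setIntegral_fract_mul_mem_comp_floor (hN : 0 < N) {A : Set ℝ} (hA : MeasurableSet A)
    (hs : ∀ k ∉ s, a k = 0) :
    ∫ x in {x | Int.fract ((N : ℝ) * x) ∈ A}, a ⌊(N : ℝ) * x⌋ =
      volume.real (A ∩ Ico 0 1) * ∫ x, a ⌊(N : ℝ) * x⌋ := by
  have hint : ∀ {B : Set ℝ}, MeasurableSet B →
      ∫ x in {x | Int.fract ((N : ℝ) * x) ∈ B}, a ⌊(N : ℝ) * x⌋ =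
        ∑ k ∈ s, a k * (volume.real (B ∩ Ico 0 1) / N) := fun hB => by
    rw [integral_comp_of_finite_support (measurable_floor_mul N) hs
      fun k _ => restrict_fract_mul_mem_floor_mul_fiber_ne_top hN hB k]
    simp_rw [measureReal_def, restrict_fract_mul_mem_floor_mul_fiber hN hB, ENNReal.toReal_div,
      ENNReal.toReal_natCast]
  have huniv : ∫ x, a ⌊(N : ℝ) * x⌋ =
      ∫ x in {x | Int.fract ((N : ℝ) * x) ∈ univ}, a ⌊(N : ℝ) * x⌋ := by simp
  have hunit : volume.real (univ ∩ Ico (0 : ℝ) 1) = 1 := by simp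
  rw [huniv, hint hA, hint MeasurableSet.univ, hunit, Finset.mul_sum]
  exact Finset.sum_congr rfl fun k _ => by ring

end FloorStep

lemma dTV_nonneg (ν₁ ν₂ : Measure ℝ) : 0 ≤ dTV ν₁ ν₂ :=
  Real.iSup_nonneg fun _ => abs_nonneg _

lemma dTV_le {ν₁ ν₂ : Measure ℝ} {c : ℝ} (hc : 0 ≤ c)
    (h : ∀ A, MeasurableSet A → |(ν₁ A).toReal - (ν₂ A).toReal| ≤ c) : dTV ν₁ ν₂ ≤ c :=
  Real.iSup_le (fun A => h A.1 A.2) hc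

lemma measureReal_withDensity_ofReal {X : Type*} [MeasurableSpace X] {μ : Measure X}
    {f : X → ℝ} (hf : Integrable f μ) (hf₀ : 0 ≤ᵐ[μ] f) {s : Set X} (hs : MeasurableSet s) :
    (μ.withDensity fun x => ENNReal.ofReal (f x)).real s = ∫ x in s, f x ∂μ := by
  rw [measureReal_def, withDensity_apply _ hs,
    ← ofReal_integral_eq_lintegral_ofReal hf.integrableOn (ae_restrict_of_ae hf₀),
    ENNReal.toReal_ofReal (setIntegral_nonneg_of_ae_restrict (ae_restrict_of_ae hf₀))]

lemma abs_setIntegral_sub_le_integral_abs_sub {X : Type*} [MeasurableSpace X] {μ : Measure X}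
    {f g : X → ℝ} (hf : Integrable f μ) (hg : Integrable g μ) (s : Set X) :
    |(∫ x in s, f x ∂μ) - ∫ x in s, g x ∂μ| ≤ ∫ x, |f x - g x| ∂μ := by
  rw [← integral_sub hf.integrableOn hg.integrableOn]
  exact abs_integral_le_integral_abs.trans
    (setIntegral_le_integral (hf.sub hg).abs (Eventually.of_forall fun _ => abs_nonneg _))

theorem dTV_map_fract_mul_withDensity_le {f : ℝ → ℝ} (hf : Integrable f) (hf₀ : ∀ x, 0 ≤ f x)
    (hf₁ : ∫ x, f x = 1) {N : ℕ} (hN : 0 < N) {s : Finset ℤ} {a : ℤ → ℝ}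
    (hs : ∀ k ∉ s, a k = 0) :
    dTV (Measure.map (fun x => Int.fract ((N : ℝ) * x))
        (volume.withDensity fun x => ENNReal.ofReal (f x))) (volume.restrict (Ico 0 1)) ≤
      2 * ∫ x, |f x - a ⌊(N : ℝ) * x⌋| := by
  set δ := ∫ x, |f x - a ⌊(N : ℝ) * x⌋|
  set I := ∫ x, a ⌊(N : ℝ) * x⌋
  have ha := integrable_comp_floor_mul hN hs
  have hmass : |I - 1| ≤ δ := by
    rw [← hf₁, abs_sub_comm]
    simpa using abs_setIntegral_sub_le_integral_abs_sub hf ha univ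
  refine dTV_le (by positivity) fun A hA => ?_
  set S := {x : ℝ | Int.fract ((N : ℝ) * x) ∈ A}
  set v := volume.real (A ∩ Ico (0 : ℝ) 1)
  have hP : (Measure.map (fun x => Int.fract ((N : ℝ) * x))
      (volume.withDensity fun x => ENNReal.ofReal (f x)) A).toReal = ∫ x in S, f x := by
    rw [Measure.map_apply ((measurable_const_mul _).fract) hA]
    exact measureReal_withDensity_ofReal hf (Eventually.of_forall hf₀)
      (measurableSet_fract_mul_mem N hA)
  have hμ : (volume.restrict (Ico 0 1) A).toReal = v := by
    rw [Measure.restrict_apply hA]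
    rfl
  have hv₀ : 0 ≤ v := measureReal_nonneg
  have hv₁ : v ≤ 1 := by
    calc v ≤ volume.real (Ico (0 : ℝ) 1) :=
          measureReal_mono inter_subset_right measure_Ico_lt_top.ne
      _ = 1 := by simp
  have hlocal : |(∫ x in S, f x) - v * I| ≤ δ := by
    rw [← setIntegral_fract_mul_mem_comp_floor hN hA hs]
    exact abs_setIntegral_sub_le_integral_abs_sub hf ha S
  have hsplit : |(∫ x in S, f x) - v| ≤ |(∫ x in S, f x) - v * I| + v * |I - 1| := by
    refine (abs_sub_le _ (v * I) _).trans_eq ?_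
    rw [← mul_sub_one, abs_mul, abs_of_nonneg hv₀]
  rw [hP, hμ]
  nlinarith [abs_nonneg (I - 1)]

lemma floor_mul_div_le {c : ℝ} (hc : 0 < c) (x : ℝ) : ⌊c * x⌋ / c ≤ x := by
  rw [div_le_iff₀' hc]
  exact Int.floor_le _

lemma sub_inv_lt_floor_mul_div {c : ℝ} (hc : 0 < c) (x : ℝ) : x - c⁻¹ < ⌊c * x⌋ / c := by
  rw [lt_div_iff₀' hc, mul_sub, mul_inv_cancel₀ hc.ne']
  linarith [Int.lt_floor_add_one (c * x)]

lemma tendsto_floor_mul_div (x : ℝ) :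
    Tendsto (fun N : ℕ => (⌊(N : ℝ) * x⌋ : ℝ) / N) atTop (nhds x) := by
  have hlow : Tendsto (fun N : ℕ => x - (N : ℝ)⁻¹) atTop (nhds x) := by
    simpa using tendsto_const_nhds.sub (tendsto_inv_atTop_nhds_zero_nat (𝕜 := ℝ))
  refine tendsto_of_tendsto_of_tendsto_of_le_of_le' hlow tendsto_const_nhds ?_ ?_
  · filter_upwards [eventually_gt_atTop 0] with N hN
    exact (sub_inv_lt_floor_mul_div (Nat.cast_pos.2 hN) x).le
  · filter_upwards [eventually_gt_atTop 0] with N hN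
    exact floor_mul_div_le (Nat.cast_pos.2 hN) x

lemma abs_sub_comp_floor_mul_div_le_indicator {g : ℝ → ℝ} {C r : ℝ} (hC : ∀ x, |g x| ≤ C)
    (hr : ∀ y, r < |y| → g y = 0) {N : ℕ} (hN : 0 < N) (x : ℝ) :
    |g x - g (⌊(N : ℝ) * x⌋ / N)| ≤
      (Metric.closedBall (0 : ℝ) (r + 1)).indicator (fun _ => 2 * C) x := by
  by_cases hx : x ∈ Metric.closedBall (0 : ℝ) (r + 1)
  · rw [indicator_of_mem hx]
    exact (abs_sub _ _).trans (by linarith [hC x, hC (⌊(N : ℝ) * x⌋ / N)])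
  · rw [indicator_of_notMem hx]
    rw [Metric.mem_closedBall, dist_zero_right, Real.norm_eq_abs, not_le] at hx
    have hN' : (0 : ℝ) < N := Nat.cast_pos.2 hN
    have hinv : (N : ℝ)⁻¹ ≤ 1 := inv_le_one_of_one_le₀ (Nat.one_le_cast.2 hN)
    have h₁ := floor_mul_div_le hN' x
    have h₂ := sub_inv_lt_floor_mul_div hN' x
    have hclose : |x - ⌊(N : ℝ) * x⌋ / N| ≤ 1 := abs_le.2 ⟨by linarith, by linarith⟩
    have hfar : r < |(⌊(N : ℝ) * x⌋ : ℝ) / N| := by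
      linarith [abs_sub_abs_le_abs_sub x (⌊(N : ℝ) * x⌋ / N)]
    rw [hr x (by linarith), hr _ hfar, sub_self, abs_zero]

theorem tendsto_integral_abs_sub_comp_floor_mul_div {g : ℝ → ℝ} (hg : Continuous g)
    (hgc : HasCompactSupport g) :
    Tendsto (fun N : ℕ => ∫ x, |g x - g (⌊(N : ℝ) * x⌋ / N)|) atTop (nhds 0) := by
  obtain ⟨C, hC⟩ := hg.bounded_above_of_compact_support hgc
  obtain ⟨r, hr⟩ := hgc.isCompact.isBounded.subset_closedBall 0
  have hzero : ∀ y, r < |y| → g y = 0 := fun y hy =>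
    image_eq_zero_of_notMem_tsupport fun h => by
      have := hr h
      rw [Metric.mem_closedBall, dist_zero_right, Real.norm_eq_abs] at this
      linarith
  have hmeas : ∀ N : ℕ, AEStronglyMeasurable (fun x => |g x - g (⌊(N : ℝ) * x⌋ / N)|) := fun N =>
    (hg.measurable.sub (hg.measurable.comp
      ((measurable_from_top.comp (measurable_floor_mul N)).div_const _))).abs.aestronglyMeasurable
  simpa using tendsto_integral_filter_of_dominated_convergence (μ := volume)
    (F := fun (N : ℕ) x => |g x - g (⌊(N : ℝ) * x⌋ / N)|) (f := fun _ => 0)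
    ((Metric.closedBall (0 : ℝ) (r + 1)).indicator fun _ => 2 * C)
    (Eventually.of_forall hmeas)
    (by
      filter_upwards [eventually_gt_atTop 0] with N hN
      exact Eventually.of_forall fun x => by
        simpa using abs_sub_comp_floor_mul_div_le_indicator (fun x => by simpa using hC x)
          hzero hN x)
    ((integrable_indicator_iff measurableSet_closedBall).2
      (integrableOn_const measure_closedBall_lt_top.ne))
    (Eventually.of_forall fun x => by
      simpa using ((hg.tendsto x).comp (tendsto_floor_mul_div x)).const_sub (g x) |>.abs)

lemma HasCompactSupport.finite_support_comp_intCast_div {g : ℝ → ℝ} (hg : HasCompactSupport g)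
    {c : ℝ} (hc : c ≠ 0) : (Function.support fun k : ℤ => g (k / c)).Finite := by
  have h := (hg.comp_smul (inv_ne_zero hc)).comp_isClosedEmbedding Int.isClosedEmbedding_coe_real
  simp only [Function.comp_def, smul_eq_mul, inv_mul_eq_div] at h
  exact h.isCompact.finite_of_discrete.subset (subset_tsupport _)

theorem eventually_exists_integral_abs_sub_comp_floor_mul_lt {f : ℝ → ℝ} (hf : Integrable f)
    {ε : ℝ} (hε : 0 < ε) :
    ∀ᶠ N : ℕ in atTop, ∃ (s : Finset ℤ) (a : ℤ → ℝ),
      (∀ k ∉ s, a k = 0) ∧ ∫ x, |f x - a ⌊(N : ℝ) * x⌋| < ε := by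
  obtain ⟨g, hgc, hfg, hg, hgi⟩ := hf.exists_hasCompactSupport_integral_sub_le (half_pos hε)
  filter_upwards [(tendsto_integral_abs_sub_comp_floor_mul_div hg hgc).eventually
    (gt_mem_nhds (half_pos hε)), eventually_gt_atTop 0] with N hgN hN
  have hfin := hgc.finite_support_comp_intCast_div (Nat.cast_pos.2 hN).ne'
  have hs : ∀ k ∉ hfin.toFinset, g (k / N) = 0 := fun k hk =>
    Function.notMem_support.1 fun h => hk (hfin.mem_toFinset.2 h)
  refine ⟨hfin.toFinset, fun k => g (k / N), hs, ?_⟩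
  have hfg_int : Integrable fun x => |f x - g x| := (hf.sub hgi).abs
  have hgs_int : Integrable fun x => |g x - g (⌊(N : ℝ) * x⌋ / N)| :=
    (hgi.sub (integrable_comp_floor_mul hN hs)).abs
  calc ∫ x, |f x - g (⌊(N : ℝ) * x⌋ / N)|
      ≤ ∫ x, (|f x - g x| + |g x - g (⌊(N : ℝ) * x⌋ / N)|) :=
        integral_mono_of_nonneg (Eventually.of_forall fun _ => abs_nonneg _)
          (hfg_int.add hgs_int)
          (Eventually.of_forall fun x => abs_sub_le _ _ _)
    _ = (∫ x, |f x - g x|) + ∫ x, |g x - g (⌊(N : ℝ) * x⌋ / N)| :=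
        integral_add hfg_int hgs_int
    _ < ε := by
        simp only [Real.norm_eq_abs] at hfg
        linarith

theorem tendsto_dTV_map_fract_mul_withDensity {f : ℝ → ℝ} (hf : Integrable f)
    (hf₀ : ∀ x, 0 ≤ f x) (hf₁ : ∫ x, f x = 1) :
    Tendsto (fun N : ℕ => dTV (Measure.map (fun x => Int.fract ((N : ℝ) * x))
        (volume.withDensity fun x => ENNReal.ofReal (f x))) (volume.restrict (Ico 0 1)))
      atTop (nhds 0) := by
  refine tendsto_order.2 ⟨fun b hb => Eventually.of_forall fun N => hb.trans_le (dTV_nonneg _ _),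
    fun ε hε => ?_⟩
  filter_upwards [eventually_exists_integral_abs_sub_comp_floor_mul_lt hf (half_pos hε),
    eventually_gt_atTop 0] with N ⟨s, a, hs, hfa⟩ hN
  linarith [dTV_map_fract_mul_withDensity_le hf hf₀ hf₁ hN hs]

lemma Int.fract_natCast_mul_fract (q : ℕ) (y : ℝ) :
    Int.fract ((q : ℝ) * Int.fract y) = Int.fract ((q : ℝ) * y) := by
  rw [← Int.self_sub_floor y, mul_sub, ← Int.cast_natCast, ← Int.cast_mul, Int.fract_sub_intCast]

lemma T_iterate_succ (q n : ℕ) (x : ℝ) :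
    (T q)^[n + 1] x = Int.fract ((q : ℝ) ^ (n + 1) * x) := by
  induction n with
  | zero => simp [T]
  | succ n ih =>
    rw [Function.iterate_succ_apply', ih, T, Int.fract_natCast_mul_fract, ← mul_assoc, ← pow_succ']

lemma integrable_integral_eq_one_of_isProbabilityMeasure_withDensity {X : Type*} [MeasurableSpace X]
    {μ : Measure X} {f : X → ℝ} (hf : Measurable f) (hf₀ : ∀ x, 0 ≤ f x)
    [IsProbabilityMeasure (μ.withDensity fun x => ENNReal.ofReal (f x))] :
    Integrable f μ ∧ ∫ x, f x ∂μ = 1 := by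
  have hmass : ∫⁻ x, ENNReal.ofReal (f x) ∂μ = 1 := by
    have := measure_univ (μ := μ.withDensity fun x => ENNReal.ofReal (f x))
    rwa [withDensity_apply _ MeasurableSet.univ, Measure.restrict_univ] at this
  have hf₀' : 0 ≤ᵐ[μ] f := Eventually.of_forall hf₀
  refine ⟨(lintegral_ofReal_ne_top_iff_integrable hf.aestronglyMeasurable hf₀').1
    (by simp [hmass]), ?_⟩
  rw [integral_eq_lintegral_of_nonneg_ae hf₀' hf.aestronglyMeasurable, hmass, ENNReal.toReal_one]

theorem stmt13_general
    {Ω : Type*} [MeasurableSpace Ω] (ℙ : Measure Ω) [IsProbabilityMeasure ℙ]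
    (q : ℕ) (hq : 2 ≤ q)
    (f : ℝ → ℝ) (hf_meas : Measurable f) (hf_nonneg : ∀ x, 0 ≤ f x)
    (X : Ω → ℝ) (hX : Measurable X)
    (hlaw : Measure.map X ℙ = volume.withDensity (fun x => ENNReal.ofReal (f x))) :
    Tendsto (fun n : ℕ =>
        dTV (Measure.map (fun ω => (T q)^[n] (X ω)) ℙ)
          (volume.restrict (Set.Ico (0:ℝ) 1)))
      atTop (nhds 0) := by
  have : IsProbabilityMeasure (volume.withDensity fun x => ENNReal.ofReal (f x)) :=
    hlaw ▸ Measure.isProbabilityMeasure_map hX.aemeasurable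
  obtain ⟨hf_int, hf_one⟩ := 
    integrable_integral_eq_one_of_isProbabilityMeasure_withDensity (μ := volume) hf_meas hf_nonneg
  have hpow : Tendsto (fun n : ℕ => q ^ (n + 1)) atTop atTop :=
    (tendsto_pow_atTop_atTop_of_one_lt (by omega)).comp (tendsto_add_atTop_nat 1)
  rw [← tendsto_add_atTop_iff_nat 1]
  convert (tendsto_dTV_map_fract_mul_withDensity hf_int hf_nonneg hf_one).comp hpow using 2 with n
  have hiter : (T q)^[n + 1] = fun x => Int.fract (((q ^ (n + 1) : ℕ) : ℝ) * x) := by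
    funext x
    rw [T_iterate_succ, Nat.cast_pow]
  rw [Function.comp_apply, ← hlaw, Measure.map_map ((measurable_const_mul _).fract) hX, hiter]
  rfl

theorem stmt13
    {Ω : Type*} [MeasurableSpace Ω] (ℙ : Measure Ω) [IsProbabilityMeasure ℙ]
    (q : ℕ) (hq : 2 ≤ q)
    (f : ℝ → ℝ) (hf_meas : Measurable f) (hf_nonneg : ∀ x, 0 ≤ f x)
    (hf_supp : ∀ x, x ∉ Set.Ioo (0:ℝ) 1 → f x = 0)
    (X : Ω → ℝ) (hX : Measurable X) (hXrange : ∀ ω, X ω ∈ Set.Ico (0:ℝ) 1)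
    (hlaw : Measure.map X ℙ = volume.withDensity (fun x => ENNReal.ofReal (f x))) :
    Tendsto (fun n : ℕ =>
        dTV (Measure.map (fun ω => (T q)^[n] (X ω)) ℙ)
          (volume.restrict (Set.Ico (0:ℝ) 1)))
      atTop (nhds 0) :=
  stmt13_general ℙ q hq f hf_meas hf_nonneg X hX hlaw
end

section
/- Let q ≥ 2 be an integer and let X be a random variable with values in [0,1) whose law has density f concentrated on (0,1), where f is differentiable on (0,1) with ‖f′‖_∞ = sup_{(0,1)} |f′| < ∞. Then for every n ≥ 1, the law P_n of T^n(X) satisfies d_TV(P_n, μ) ≤ (1/6) q^{−2n} Σ_{j=0}^{q^n−1} ‖f′_{n,j}‖_∞ ≤ (1/6) q^{−n} ‖f′‖_∞; in particular P_n converges to μ exponentially fast in total variation. -/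
open MeasureTheory Set

/-!
With `N = q ^ n`, `T^n(x) = fract (N x)` on `[0,1)`, so `T^n(X)` has density `g = ∑ j < N, g_j`
on `[0,1)` with `g_j(y) = f((y + j)/N)/N` (`transferBranch f N j`). Since `g` and the uniform
density both have mass one, `d_TV ≤ ½ ∫ |g - 1| ≤ ½ ∑ j, ∫ |g_j - ∫ g_j|`. The branch `g_j` has
derivative bounded by `M_j / N²`, where `M_j` is the supremum of `|f'|` on `(j/N, (j+1)/N)`, and a
function on `(0,1)` with derivative bounded by `L` deviates from its mean by at most `L/3` in `L¹`,
because `∫∫ |y - s| dy ds = 1/3`. This gives `d_TV ≤ (1/6) N⁻² ∑ j, M_j`, and `M_j ≤ ‖f'‖_∞`.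
-/

theorem T_iterate_fract (q n : ℕ) (x : ℝ) :
    (T q)^[n] (Int.fract x) = Int.fract ((q : ℝ) ^ n * x) := by
  induction n generalizing x with
  | zero => simp
  | succ n ih =>
    have hT : T q (Int.fract x) = Int.fract ((q : ℝ) * x) := by
      have h : (q : ℝ) * Int.fract x = q * x - ((q * ⌊x⌋ : ℤ) : ℝ) := by
        rw [Int.fract]; push_cast; ring
      rw [T, h, Int.fract_sub_intCast]
    rw [Function.iterate_succ_apply, hT, ih, pow_succ, mul_assoc]

theorem sub_intCast_mem_Ico_iff {x : ℝ} {j : ℤ} : x - j ∈ Ico (0 : ℝ) 1 ↔ ⌊x⌋ = j := by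
  rw [Int.floor_eq_iff, mem_Ico]
  constructor <;> rintro ⟨h₀, h₁⟩ <;> constructor <;> linarith

theorem preimage_fract_mul_inter_Ico {N : ℕ} (hN : 0 < N) {B : Set ℝ} (hB : B ⊆ Ico 0 1) :
    (fun x => Int.fract ((N : ℝ) * x)) ⁻¹' B ∩ Ico 0 1
      = ⋃ j ∈ Finset.range N, (fun x => (N : ℝ) * x - j) ⁻¹' B := by
  have hNR : (0 : ℝ) < N := by exact_mod_cast hN
  ext x
  simp only [mem_inter_iff, mem_preimage, mem_iUnion, Finset.mem_range, exists_prop, mem_Ico]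
  constructor
  · rintro ⟨hfract, hx₀, hx₁⟩
    have h₀ : 0 ≤ ⌊(N : ℝ) * x⌋ := Int.floor_nonneg.2 (by positivity)
    have h₁ : ⌊(N : ℝ) * x⌋ < N := Int.floor_lt.2 (by push_cast; nlinarith)
    refine ⟨⌊(N : ℝ) * x⌋.toNat, by omega, ?_⟩
    have hcast : ((⌊(N : ℝ) * x⌋.toNat : ℕ) : ℝ) = ⌊(N : ℝ) * x⌋ := by
      exact_mod_cast Int.toNat_of_nonneg h₀
    rwa [hcast, Int.self_sub_floor]
  · rintro ⟨j, hj, hmem⟩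
    have hfloor : ⌊(N : ℝ) * x⌋ = j := sub_intCast_mem_Ico_iff.1 (by exact_mod_cast hB hmem)
    have hj' : (j : ℝ) + 1 ≤ N := by exact_mod_cast hj
    obtain ⟨h₀, h₁⟩ := hB hmem
    refine ⟨?_, ?_, ?_⟩
    · rwa [← Int.self_sub_floor, hfloor, Int.cast_natCast]
    · nlinarith
    · nlinarith

theorem pairwise_disjoint_preimage_mul_sub (N : ℕ) {B : Set ℝ} (hB : B ⊆ Ico 0 1) :
    Pairwise (Function.onFun Disjoint fun j : ℕ => (fun x => (N : ℝ) * x - j) ⁻¹' B) := by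
  intro j k hjk
  refine disjoint_left.2 fun x hj hk => hjk ?_
  have hj' := sub_intCast_mem_Ico_iff.1 (by exact_mod_cast hB hj : (N : ℝ) * x - (j : ℤ) ∈ _)
  have hk' := sub_intCast_mem_Ico_iff.1 (by exact_mod_cast hB hk : (N : ℝ) * x - (k : ℤ) ∈ _)
  exact_mod_cast hj'.symm.trans hk'

theorem setIntegral_preimage_mul_sub {c : ℝ} (hc : 0 < c) (d : ℝ) (g : ℝ → ℝ) {B : Set ℝ}
    (hB : MeasurableSet B) :
    ∫ x in (fun x => c * x - d) ⁻¹' B, g x = c⁻¹ * ∫ y in B, g ((y + d) / c) := by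
  have hind : ((fun x => c * x - d) ⁻¹' B).indicator g
      = fun x => B.indicator (fun y => g ((y + d) / c)) (c * x - d) := by
    ext x
    by_cases h : c * x - d ∈ B
    · rw [indicator_of_mem h, indicator_of_mem (show x ∈ (fun x => c * x - d) ⁻¹' B from h),
        sub_add_cancel, mul_div_cancel_left₀ _ hc.ne']
    · rw [indicator_of_notMem h, indicator_of_notMem (show x ∉ (fun x => c * x - d) ⁻¹' B from h)]
  rw [← integral_indicator ((by fun_prop : Measurable fun x : ℝ => c * x - d) hB),
    ← integral_indicator hB, hind,
    Measure.integral_comp_mul_left (fun z => B.indicator (fun y => g ((y + d) / c)) (z - d)),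
    integral_sub_right_eq_self, abs_of_pos (inv_pos.2 hc), smul_eq_mul]

noncomputable def transferBranch (f : ℝ → ℝ) (N j : ℕ) (y : ℝ) : ℝ := (N : ℝ)⁻¹ * f ((y + j) / N)

theorem integrable_transferBranch {f : ℝ → ℝ} (hf : Integrable f) (N j : ℕ) :
    Integrable (transferBranch f N j) := by
  rcases Nat.eq_zero_or_pos N with rfl | hN
  · have h₀ : transferBranch f 0 j = 0 := funext fun y => by simp [transferBranch]
    exact h₀ ▸ integrable_zero _ _ _
  · exact ((hf.comp_div (Nat.cast_pos.2 hN).ne').comp_add_right (j : ℝ)).const_mul _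

theorem hasFiniteIntegral_of_isFiniteMeasure_withDensity_ofReal {α : Type*} [MeasurableSpace α]
    {μ : Measure α} {f : α → ℝ} (hf : 0 ≤ᵐ[μ] f)
    [IsFiniteMeasure (μ.withDensity fun x => ENNReal.ofReal (f x))] : HasFiniteIntegral f μ := by
  rw [hasFiniteIntegral_iff_ofReal hf, ← setLIntegral_univ,
    ← withDensity_apply _ MeasurableSet.univ]
  exact measure_lt_top _ _

theorem withDensity_preimage_fract_mul {f : ℝ → ℝ} (hf_int : Integrable f)
    (hf_nonneg : ∀ x, 0 ≤ f x) (hf_supp : ∀ x ∉ Ico (0 : ℝ) 1, f x = 0) {N : ℕ} (hN : 0 < N)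
    {A : Set ℝ} (hA : MeasurableSet A) :
    ((volume.withDensity fun x => ENNReal.ofReal (f x))
        ((fun x => Int.fract ((N : ℝ) * x)) ⁻¹' A)).toReal
      = ∑ j ∈ Finset.range N, ∫ y in A, transferBranch f N j y ∂(volume.restrict (Ico 0 1)) := by
  have hpre : (fun x => Int.fract ((N : ℝ) * x)) ⁻¹' A
      = (fun x => Int.fract ((N : ℝ) * x)) ⁻¹' (A ∩ Ico 0 1) := by
    ext x
    simp [Int.fract_nonneg, Int.fract_lt_one]
  have hB : MeasurableSet (A ∩ Ico 0 1) := hA.inter measurableSet_Ico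
  have hS : MeasurableSet ((fun x => Int.fract ((N : ℝ) * x)) ⁻¹' (A ∩ Ico 0 1)) :=
    (by fun_prop : Measurable fun x : ℝ => Int.fract ((N : ℝ) * x)) hB
  rw [hpre, withDensity_apply _ hS, ← ofReal_integral_eq_lintegral_ofReal hf_int.integrableOn
      (ae_of_all _ hf_nonneg), ENNReal.toReal_ofReal (setIntegral_nonneg hS fun x _ => hf_nonneg x),
    setIntegral_eq_of_subset_of_forall_sdiff_eq_zero hS inter_subset_left
      fun x hx => hf_supp x fun h => hx.2 ⟨hx.1, h⟩,
    preimage_fract_mul_inter_Ico hN inter_subset_right,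
    integral_biUnion_finset (s := fun j : ℕ => (fun x => (N : ℝ) * x - j) ⁻¹' (A ∩ Ico 0 1)) _
      (fun j _ => (by fun_prop : Measurable fun x : ℝ => (N : ℝ) * x - j) hB)
      ((pairwise_disjoint_preimage_mul_sub N inter_subset_right).set_pairwise _)
      fun j _ => hf_int.integrableOn]
  refine Finset.sum_congr rfl fun j _ => ?_
  rw [setIntegral_preimage_mul_sub (Nat.cast_pos.2 hN) _ _ hB, Measure.restrict_restrict hA]
  simp only [transferBranch, integral_const_mul]

theorem abs_setIntegral_le_half_integral_abs {α : Type*} [MeasurableSpace α] {μ : Measure α}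
    {u : α → ℝ} (hu : Integrable u μ) (h₀ : ∫ x, u x ∂μ = 0) {B : Set α} (hB : MeasurableSet B) :
    |∫ x in B, u x ∂μ| ≤ 1 / 2 * ∫ x, |u x| ∂μ := by
  have hsplit := integral_add_compl hB hu
  have hsplit_abs := integral_add_compl hB hu.abs
  have hin := abs_integral_le_integral_abs (f := u) (μ := μ.restrict B)
  have hout := abs_integral_le_integral_abs (f := u) (μ := μ.restrict Bᶜ)
  rw [h₀, add_eq_zero_iff_eq_neg] at hsplit
  rw [← abs_neg, ← hsplit] at hout
  linarith

theorem abs_sum_setIntegral_sub_measure_le {α ι : Type*} [MeasurableSpace α] (μ : Measure α)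
    [IsProbabilityMeasure μ] (s : Finset ι) {F : ι → α → ℝ} (hF : ∀ i ∈ s, Integrable (F i) μ)
    (hmass : ∑ i ∈ s, ∫ x, F i x ∂μ = 1) {B : Set α} (hB : MeasurableSet B) :
    |∑ i ∈ s, ∫ x in B, F i x ∂μ - (μ B).toReal|
      ≤ 1 / 2 * ∑ i ∈ s, ∫ x, |F i x - ∫ y, F i y ∂μ| ∂μ := by
  set c : ι → ℝ := fun i => ∫ y, F i y ∂μ
  have hdev : ∀ i ∈ s, Integrable (fun x => F i x - c i) μ :=
    fun i hi => (hF i hi).sub (integrable_const _)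
  have hu : Integrable (fun x => ∑ i ∈ s, (F i x - c i)) μ := integrable_finsetSum _ hdev
  have hu₀ : ∫ x, ∑ i ∈ s, (F i x - c i) ∂μ = 0 := by
    rw [integral_finsetSum _ hdev]
    exact Finset.sum_eq_zero fun i hi => by
      rw [integral_sub (hF i hi) (integrable_const _), integral_const, probReal_univ, one_smul,
        sub_self]
  have huB : ∫ x in B, ∑ i ∈ s, (F i x - c i) ∂μ = ∑ i ∈ s, ∫ x in B, F i x ∂μ - (μ B).toReal := by
    rw [integral_finsetSum _ fun i hi => (hdev i hi).restrict,
      Finset.sum_congr rfl fun i hi => integral_sub (hF i hi).restrict (integrable_const (c i)),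
      Finset.sum_sub_distrib]
    simp only [setIntegral_const, smul_eq_mul]
    rw [← Finset.mul_sum, hmass, mul_one, measureReal_def]
  calc |∑ i ∈ s, ∫ x in B, F i x ∂μ - (μ B).toReal|
      = |∫ x in B, ∑ i ∈ s, (F i x - c i) ∂μ| := by rw [huB]
    _ ≤ 1 / 2 * ∫ x, |∑ i ∈ s, (F i x - c i)| ∂μ := abs_setIntegral_le_half_integral_abs hu hu₀ hB
    _ ≤ 1 / 2 * ∫ x, ∑ i ∈ s, |F i x - c i| ∂μ := by
        gcongr
        · exact hu.abs
        · exact integrable_finsetSum _ fun i hi => (hdev i hi).abs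
        · exact fun x => Finset.abs_sum_le_sum_abs _ _
    _ = 1 / 2 * ∑ i ∈ s, ∫ x, |F i x - c i| ∂μ := by
        rw [integral_finsetSum _ fun i hi => (hdev i hi).abs]

theorem integral_abs_sub_Ioo_zero_one {y : ℝ} (hy : y ∈ Icc (0 : ℝ) 1) :
    ∫ s in Ioo (0 : ℝ) 1, |y - s| = y ^ 2 / 2 + (1 - y) ^ 2 / 2 := by
  have hint : ∀ a b : ℝ, IntervalIntegrable (fun s => |y - s|) volume a b :=
    fun a b => (by fun_prop : Continuous fun s : ℝ => |y - s|).intervalIntegrable a b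
  have hleft : ∫ s in (0 : ℝ)..y, |y - s| = ∫ s in (0 : ℝ)..y, (y - s) :=
    intervalIntegral.integral_congr fun s hs => by
      rw [uIcc_of_le hy.1] at hs
      exact abs_of_nonneg (by linarith [hs.2])
  have hright : ∫ s in y..(1 : ℝ), |y - s| = ∫ s in y..(1 : ℝ), (s - y) :=
    intervalIntegral.integral_congr fun s hs => by
      rw [uIcc_of_le hy.2] at hs
      exact abs_of_nonpos (by linarith [hs.1]) |>.trans (neg_sub y s)
  rw [← integral_Ioc_eq_integral_Ioo, ← intervalIntegral.integral_of_le zero_le_one,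
    ← intervalIntegral.integral_add_adjacent_intervals (hint 0 y) (hint y 1), hleft, hright]
  simp only [intervalIntegral.integral_comp_sub_left fun s => s,
    intervalIntegral.integral_comp_sub_right fun s => s, integral_id]
  ring

theorem integral_sq_div_two_add_one_sub_sq_div_two :
    ∫ y in Ioo (0 : ℝ) 1, (y ^ 2 / 2 + (1 - y) ^ 2 / 2) = 1 / 3 := by
  rw [← integral_Ioc_eq_integral_Ioo, ← intervalIntegral.integral_of_le zero_le_one,
    intervalIntegral.integral_add (Continuous.intervalIntegrable (by fun_prop) _ _)
      (Continuous.intervalIntegrable (by fun_prop) _ _),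
    intervalIntegral.integral_comp_sub_left fun y => y ^ 2 / 2]
  norm_num

theorem integral_abs_sub_integral_le_of_abs_deriv_le {F F' : ℝ → ℝ} {L : ℝ}
    (hF_int : IntegrableOn F (Ioo 0 1)) (hF : ∀ t ∈ Ioo (0 : ℝ) 1, HasDerivAt F (F' t) t)
    (hF' : ∀ t ∈ Ioo (0 : ℝ) 1, |F' t| ≤ L) :
    ∫ y in Ioo (0 : ℝ) 1, |F y - ∫ s in Ioo (0 : ℝ) 1, F s| ≤ L / 3 := by
  have hlip : ∀ y ∈ Ioo (0 : ℝ) 1, ∀ s ∈ Ioo (0 : ℝ) 1, |F y - F s| ≤ L * |y - s| :=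
    fun y hy s hs => Convex.norm_image_sub_le_of_norm_hasDerivWithin_le
      (fun t ht => (hF t ht).hasDerivWithinAt) hF' (convex_Ioo 0 1) hs hy
  have hcont_int : ∀ g : ℝ → ℝ, Continuous g → IntegrableOn g (Ioo (0 : ℝ) 1) :=
    fun g hg => hg.integrableOn_Icc.mono_set Ioo_subset_Icc_self
  have hpointwise : ∀ y ∈ Ioo (0 : ℝ) 1,
      |F y - ∫ s in Ioo (0 : ℝ) 1, F s| ≤ L * (y ^ 2 / 2 + (1 - y) ^ 2 / 2) := by
    intro y hy
    calc |F y - ∫ s in Ioo (0 : ℝ) 1, F s|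
        = |∫ s in Ioo (0 : ℝ) 1, (F y - F s)| := by
          rw [integral_sub (integrable_const (F y)) hF_int, setIntegral_const]
          simp
      _ ≤ ∫ s in Ioo (0 : ℝ) 1, |F y - F s| := abs_integral_le_integral_abs
      _ ≤ ∫ s in Ioo (0 : ℝ) 1, L * |y - s| :=
          setIntegral_mono_on ((integrable_const _).sub hF_int).abs
            (hcont_int _ (by fun_prop)) measurableSet_Ioo (hlip y hy)
      _ = L * (y ^ 2 / 2 + (1 - y) ^ 2 / 2) := by
          rw [integral_const_mul, integral_abs_sub_Ioo_zero_one (Ioo_subset_Icc_self hy)]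
  calc ∫ y in Ioo (0 : ℝ) 1, |F y - ∫ s in Ioo (0 : ℝ) 1, F s|
      ≤ ∫ y in Ioo (0 : ℝ) 1, L * (y ^ 2 / 2 + (1 - y) ^ 2 / 2) :=
        setIntegral_mono_on (hF_int.sub (integrable_const _)).abs
          (hcont_int _ (by fun_prop)) measurableSet_Ioo hpointwise
    _ = L / 3 := by rw [integral_const_mul, integral_sq_div_two_add_one_sub_sq_div_two]; ring

theorem Ioo_div_subset_Ioo {N j : ℕ} (hj : j < N) :
    Ioo ((j : ℝ) / N) ((j + 1) / N) ⊆ Ioo 0 1 :=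
  Ioo_subset_Ioo (by positivity) (div_le_one_of_le₀ (by exact_mod_cast hj) (Nat.cast_nonneg N))

theorem add_div_mem_Ioo {N : ℕ} (hN : 0 < N) (j : ℕ) {t : ℝ} (ht : t ∈ Ioo (0 : ℝ) 1) :
    (t + j) / N ∈ Ioo ((j : ℝ) / N) ((j + 1) / N) := by
  have hNR : (0 : ℝ) < N := Nat.cast_pos.2 hN
  exact ⟨div_lt_div_of_pos_right (by linarith [ht.1]) hNR,
    div_lt_div_of_pos_right (by linarith [ht.2]) hNR⟩

theorem integral_abs_transferBranch_sub_le {f f' : ℝ → ℝ} (hf : Integrable f) {N j : ℕ}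
    (hN : 0 < N) {M : ℝ} (hderiv : ∀ x ∈ Ioo ((j : ℝ) / N) ((j + 1) / N), HasDerivAt f (f' x) x)
    (hM : ∀ x ∈ Ioo ((j : ℝ) / N) ((j + 1) / N), |f' x| ≤ M) :
    ∫ y, |transferBranch f N j y - ∫ s, transferBranch f N j s ∂(volume.restrict (Ico 0 1))|
        ∂(volume.restrict (Ico 0 1)) ≤ M / (3 * N ^ 2) := by
  have hNR : (0 : ℝ) < N := Nat.cast_pos.2 hN
  rw [← Measure.restrict_congr_set Ioo_ae_eq_Ico]
  have hderiv' : ∀ t ∈ Ioo (0 : ℝ) 1, HasDerivAt (transferBranch f N j)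
      ((N : ℝ)⁻¹ * (f' ((t + j) / N) * (1 / N))) t := fun t ht =>
    ((hderiv _ (add_div_mem_Ioo hN j ht)).comp t
      (((hasDerivAt_id' t).add_const (j : ℝ)).div_const (N : ℝ))).const_mul _
  have hbound : ∀ t ∈ Ioo (0 : ℝ) 1, |(N : ℝ)⁻¹ * (f' ((t + j) / N) * (1 / N))| ≤ M / N ^ 2 := by
    intro t ht
    rw [abs_mul, abs_mul, abs_of_pos (inv_pos.2 hNR), abs_of_pos (one_div_pos.2 hNR)]
    calc (N : ℝ)⁻¹ * (|f' ((t + j) / N)| * (1 / N)) = |f' ((t + j) / N)| / N ^ 2 := by ring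
      _ ≤ M / N ^ 2 := by gcongr; exact hM _ (add_div_mem_Ioo hN j ht)
  calc _ ≤ M / N ^ 2 / 3 := integral_abs_sub_integral_le_of_abs_deriv_le
        (integrable_transferBranch hf N j).integrableOn hderiv' hbound
    _ = M / (3 * N ^ 2) := by ring

theorem sum_sSup_image_Ioo_div_le {g : ℝ → ℝ} (hbdd : BddAbove (g '' Ioo (0 : ℝ) 1)) (N : ℕ) :
    ∑ j ∈ Finset.range N, sSup (g '' Ioo ((j : ℝ) / N) ((j + 1) / N))
      ≤ N * sSup (g '' Ioo 0 1) := by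
  calc _ ≤ ∑ _j ∈ Finset.range N, sSup (g '' Ioo 0 1) := by
        refine Finset.sum_le_sum fun j hj => ?_
        have hNR : (0 : ℝ) < N := by exact_mod_cast (Finset.mem_range.1 hj).pos
        exact csSup_le_csSup hbdd
          ((nonempty_Ioo.2 (div_lt_div_of_pos_right (lt_add_one _) hNR)).image g)
          (image_mono (Ioo_div_subset_Ioo (Finset.mem_range.1 hj)))
    _ = N * sSup (g '' Ioo 0 1) := by simp

theorem dTV_map_fract_mul_le {f f' : ℝ → ℝ} (hf_meas : Measurable f) (hf_nonneg : ∀ x, 0 ≤ f x)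
    (hf_supp : ∀ x ∉ Ico (0 : ℝ) 1, f x = 0)
    [IsProbabilityMeasure (volume.withDensity fun x => ENNReal.ofReal (f x))]
    (hderiv : ∀ x ∈ Ioo (0 : ℝ) 1, HasDerivAt f (f' x) x)
    (hbdd : BddAbove ((fun x => |f' x|) '' Ioo (0 : ℝ) 1)) {N : ℕ} (hN : 0 < N) :
    dTV ((volume.withDensity fun x => ENNReal.ofReal (f x)).map fun x => Int.fract ((N : ℝ) * x))
        (volume.restrict (Ico 0 1))
      ≤ 1 / 6 * ((N : ℝ) ^ 2)⁻¹ *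
          ∑ j ∈ Finset.range N, sSup ((fun y => |f' y|) '' Ioo ((j : ℝ) / N) ((j + 1) / N)) := by
  set μ := volume.restrict (Ico (0 : ℝ) 1)
  have : IsProbabilityMeasure μ := ⟨by simp [μ]⟩
  have hf : Integrable f :=
    ⟨hf_meas.aestronglyMeasurable,
      hasFiniteIntegral_of_isFiniteMeasure_withDensity_ofReal (ae_of_all _ hf_nonneg)⟩
  have hφ : Measurable fun x : ℝ => Int.fract ((N : ℝ) * x) := by fun_prop
  have hlaw : ∀ A, MeasurableSet A →
      (((volume.withDensity fun x => ENNReal.ofReal (f x)).map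
        fun x => Int.fract ((N : ℝ) * x)) A).toReal
        = ∑ j ∈ Finset.range N, ∫ y in A, transferBranch f N j y ∂μ := fun A hA => by
    rw [Measure.map_apply hφ hA]
    exact withDensity_preimage_fract_mul hf hf_nonneg hf_supp hN hA
  have hmass : ∑ j ∈ Finset.range N, ∫ y, transferBranch f N j y ∂μ = 1 := by
    have := Measure.isProbabilityMeasure_map (μ := volume.withDensity fun x => ENNReal.ofReal (f x))
      hφ.aemeasurable
    simpa using (hlaw univ MeasurableSet.univ).symm
  have hdev : ∀ j ∈ Finset.range N,
      ∫ y, |transferBranch f N j y - ∫ s, transferBranch f N j s ∂μ| ∂μ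
        ≤ sSup ((fun y => |f' y|) '' Ioo ((j : ℝ) / N) ((j + 1) / N)) / (3 * N ^ 2) := by
    intro j hj
    have hsub := Ioo_div_subset_Ioo (Finset.mem_range.1 hj)
    exact integral_abs_transferBranch_sub_le hf hN (fun x hx => hderiv x (hsub hx))
      fun x hx => le_csSup (hbdd.mono (image_mono hsub)) (mem_image_of_mem _ hx)
  have : Nonempty {A : Set ℝ // MeasurableSet A} := ⟨⟨∅, MeasurableSet.empty⟩⟩
  refine ciSup_le fun A => ?_
  rw [hlaw A.1 A.2]
  calc _ ≤ 1 / 2 * ∑ j ∈ Finset.range N,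
          ∫ y, |transferBranch f N j y - ∫ s, transferBranch f N j s ∂μ| ∂μ :=
        abs_sum_setIntegral_sub_measure_le μ _
          (fun j _ => (integrable_transferBranch hf N j).integrableOn) hmass A.2
    _ ≤ 1 / 2 * ∑ j ∈ Finset.range N,
          sSup ((fun y => |f' y|) '' Ioo ((j : ℝ) / N) ((j + 1) / N)) / (3 * N ^ 2) := by
        gcongr with j hj
        exact hdev j hj
    _ = _ := by rw [← Finset.sum_div]; ring

theorem stmt14_general
    {Ω : Type*} [MeasurableSpace Ω] (ℙ : Measure Ω) [IsProbabilityMeasure ℙ]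
    (q : ℕ) (hq : 2 ≤ q)
    (f f' : ℝ → ℝ) (hf_meas : Measurable f) (hf_nonneg : ∀ x, 0 ≤ f x)
    (hf_supp : ∀ x, x ∉ Set.Ioo (0:ℝ) 1 → f x = 0)
    (hderiv : ∀ x ∈ Set.Ioo (0:ℝ) 1, HasDerivAt f (f' x) x)
    -- `‖f′‖_∞ < ∞`
    (hbdd : BddAbove ((fun x => |f' x|) '' Set.Ioo (0:ℝ) 1))
    (X : Ω → ℝ) (hX : Measurable X) (hXrange : ∀ ω, X ω ∈ Set.Ico (0:ℝ) 1)
    (hlaw : Measure.map X ℙ = volume.withDensity (fun x => ENNReal.ofReal (f x)))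
    (n : ℕ) :
    dTV (Measure.map (fun ω => (T q)^[n] (X ω)) ℙ) (volume.restrict (Set.Ico (0:ℝ) 1))
      ≤ (1 / 6) * (q : ℝ) ^ (-(2 * n : ℤ)) *
          ∑ j ∈ Finset.range (q ^ n),
            sSup ((fun y => |f' y|) ''
              Set.Ioo ((j : ℝ) / (q : ℝ) ^ n) (((j : ℝ) + 1) / (q : ℝ) ^ n))
    ∧ (1 / 6) * (q : ℝ) ^ (-(2 * n : ℤ)) *
          ∑ j ∈ Finset.range (q ^ n),
            sSup ((fun y => |f' y|) ''
              Set.Ioo ((j : ℝ) / (q : ℝ) ^ n) (((j : ℝ) + 1) / (q : ℝ) ^ n))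
        ≤ (1 / 6) * (q : ℝ) ^ (-(n : ℤ)) * sSup ((fun y => |f' y|) '' Set.Ioo (0:ℝ) 1) := by
  have hiter : (fun ω => (T q)^[n] (X ω)) = (fun x => Int.fract (((q ^ n : ℕ) : ℝ) * x)) ∘ X :=
    funext fun ω => by
      rw [Function.comp_apply, Nat.cast_pow, ← T_iterate_fract, Int.fract_eq_self.2 (hXrange ω)]
  have : IsProbabilityMeasure (volume.withDensity fun x => ENNReal.ofReal (f x)) :=
    hlaw ▸ Measure.isProbabilityMeasure_map hX.aemeasurable
  have hdTV := dTV_map_fract_mul_le hf_meas hf_nonneg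
    (fun x hx => hf_supp x fun h => hx (Ioo_subset_Ico_self h)) hderiv hbdd
    (pow_pos (by omega : 0 < q) n)
  rw [← hlaw, Measure.map_map (by fun_prop) hX, ← hiter] at hdTV
  have hsum := sum_sSup_image_Ioo_div_le hbdd (q ^ n)
  have hpow : (q : ℝ) ^ (-(2 * n : ℤ)) = (((q : ℝ) ^ n) ^ 2)⁻¹ := by
    rw [zpow_neg, mul_comm, zpow_mul, zpow_natCast, zpow_ofNat]
  push_cast at hdTV hsum
  refine ⟨hpow ▸ hdTV, ?_⟩
  calc _ ≤ 1 / 6 * (((q : ℝ) ^ n) ^ 2)⁻¹ *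
          ((q : ℝ) ^ n * sSup ((fun y => |f' y|) '' Ioo 0 1)) := by
        rw [hpow]; gcongr
    _ = _ := by rw [zpow_neg, zpow_natCast]; field_simp

theorem stmt14
    {Ω : Type*} [MeasurableSpace Ω] (ℙ : Measure Ω) [IsProbabilityMeasure ℙ]
    (q : ℕ) (hq : 2 ≤ q)
    (f f' : ℝ → ℝ) (hf_meas : Measurable f) (hf_nonneg : ∀ x, 0 ≤ f x)
    (hf_supp : ∀ x, x ∉ Set.Ioo (0:ℝ) 1 → f x = 0)
    (hderiv : ∀ x ∈ Set.Ioo (0:ℝ) 1, HasDerivAt f (f' x) x)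
    -- `‖f′‖_∞ < ∞`
    (hbdd : BddAbove ((fun x => |f' x|) '' Set.Ioo (0:ℝ) 1))
    (X : Ω → ℝ) (hX : Measurable X) (hXrange : ∀ ω, X ω ∈ Set.Ico (0:ℝ) 1)
    (hlaw : Measure.map X ℙ = volume.withDensity (fun x => ENNReal.ofReal (f x)))
    (n : ℕ) (hn : 1 ≤ n) :
    dTV (Measure.map (fun ω => (T q)^[n] (X ω)) ℙ) (volume.restrict (Set.Ico (0:ℝ) 1))
      ≤ (1 / 6) * (q : ℝ) ^ (-(2 * n : ℤ)) *
          ∑ j ∈ Finset.range (q ^ n),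
            sSup ((fun y => |f' y|) ''
              Set.Ioo ((j : ℝ) / (q : ℝ) ^ n) (((j : ℝ) + 1) / (q : ℝ) ^ n))
    ∧ (1 / 6) * (q : ℝ) ^ (-(2 * n : ℤ)) *
          ∑ j ∈ Finset.range (q ^ n),
            sSup ((fun y => |f' y|) ''
              Set.Ioo ((j : ℝ) / (q : ℝ) ^ n) (((j : ℝ) + 1) / (q : ℝ) ^ n))
        ≤ (1 / 6) * (q : ℝ) ^ (-(n : ℤ)) * sSup ((fun y => |f' y|) '' Set.Ioo (0:ℝ) 1) :=
  stmt14_general ℙ q hq f f' hf_meas hf_nonneg hf_supp hderiv hbdd X hX hXrange hlaw n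
end

section
/- Let q ≥ 2 and k ≥ 1 be integers and let X be a random variable with values in the unit cube [0,1)^k whose law is absolutely continuous with joint density f concentrated on (0,1)^k. Then d_TV(P_n, μ) → 0 as n → ∞, where P_n is the law of T^n(X) with T applied coordinatewise and μ is Lebesgue measure on [0,1)^k. -/
/-!
`Tk N k` maps each box of the grid of mesh `1 / N` affinely onto the cube `[0,1)^k`, so it sends
every density that is constant on those boxes to a multiple of the uniform measure `μ`, and it
preserves `μ`. On the cube `(Tk q k)^[n] = Tk (q ^ n) k`, so if `g` is a step density on the grid
of mesh `q⁻ᵐ`, the image of `g` under `T^n` is `(∫ g) • μ` for every `n ≥ m`. Such step densities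
are dense in `L¹` among densities vanishing off the cube, and pushing forward by `T^n` moves the
two laws apart by at most `‖f - g‖₁` on every set; comparing total masses then gives
`d_TV(P_n, μ) ≤ 2 ‖f - g‖₁` for `n ≥ m`.
-/

open MeasureTheory Set Filter

/-- The base-`q` map applied coordinatewise on `[0,1)^k`. -/
noncomputable def Tk (q k : ℕ) : (Fin k → ℝ) → (Fin k → ℝ) :=
  fun x i => Int.fract ((q : ℝ) * x i)

/-- Total variation distance between measures on `ℝ^k`. -/
noncomputable def dTVk (k : ℕ) (ν₁ ν₂ : Measure (Fin k → ℝ)) : ℝ :=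
  ⨆ A : {A : Set (Fin k → ℝ) // MeasurableSet A}, |(ν₁ A.1).toReal - (ν₂ A.1).toReal|

open scoped ENNReal

lemma measurable_Tk {q k : ℕ} : Measurable (Tk q k) :=
  measurable_pi_lambda _ fun i =>
    measurable_fract.comp (measurable_const.mul (measurable_pi_apply i))

section Grid

variable {k N : ℕ}

def unitCube (k : ℕ) : Set (Fin k → ℝ) := {y | ∀ i, y i ∈ Ico (0:ℝ) 1}

/-- The box `∏ i, [j i / N, (j i + 1) / N)` of the grid of mesh `1 / N`. -/
def gridBox (k N : ℕ) (j : Fin k → Fin N) : Set (Fin k → ℝ) :=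
  (fun x => (N : ℝ) • x - fun i => (j i : ℝ)) ⁻¹' unitCube k

lemma mem_gridBox {j : Fin k → Fin N} {x : Fin k → ℝ} :
    x ∈ gridBox k N j ↔ ∀ i, (N : ℝ) * x i - j i ∈ Ico (0:ℝ) 1 := Iff.rfl

lemma unitCube_eq_pi : unitCube k = univ.pi fun _ => Ico (0:ℝ) 1 := by
  ext; simp [unitCube]

lemma measurableSet_unitCube : MeasurableSet (unitCube k) :=
  unitCube_eq_pi ▸ MeasurableSet.univ_pi fun _ => measurableSet_Ico

lemma volume_unitCube : volume (unitCube k) = 1 := by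
  simp [unitCube_eq_pi, volume_pi_pi]

instance isProbabilityMeasure_restrict_unitCube :
    IsProbabilityMeasure (volume.restrict (unitCube k)) :=
  ⟨by rw [Measure.restrict_apply_univ, volume_unitCube]⟩

lemma measurableSet_gridBox (j : Fin k → Fin N) : MeasurableSet (gridBox k N j) :=
  measurableSet_unitCube.preimage (by fun_prop)

lemma volume_preimage_smul_sub (hN : 0 < N) (v : Fin k → ℝ) (s : Set (Fin k → ℝ)) :
    volume ((fun x => (N : ℝ) • x - v) ⁻¹' s) = ((N : ℝ≥0∞) ^ k)⁻¹ * volume s := by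
  have hcomp : (fun x => (N : ℝ) • x - v) = (· + -v) ∘ ((N : ℝ) • ·) := by
    funext x; simp [sub_eq_add_neg]
  rw [hcomp, preimage_comp, Measure.addHaar_preimage_smul volume (by positivity),
    measure_preimage_add_right, Module.finrank_fin_fun, abs_of_nonneg (by positivity),
    ENNReal.ofReal_inv_of_pos (by positivity)]
  norm_cast

lemma volume_gridBox (hN : 0 < N) (j : Fin k → Fin N) :
    volume (gridBox k N j) = ((N : ℝ≥0∞) ^ k)⁻¹ := by
  rw [gridBox, volume_preimage_smul_sub hN, volume_unitCube, mul_one]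

lemma gridBox_subset_unitCube (j : Fin k → Fin N) : gridBox k N j ⊆ unitCube k := by
  intro x hx i
  obtain ⟨h₀, h₁⟩ := mem_gridBox.1 hx i
  have hj : (j i : ℝ) + 1 ≤ N := by exact_mod_cast (j i).2
  have hN : (0 : ℝ) < N := by linarith [(Nat.cast_nonneg (j i : ℕ) : (0:ℝ) ≤ j i)]
  constructor <;> nlinarith

lemma floor_mul_eq_of_mem_gridBox {j : Fin k → Fin N} {x : Fin k → ℝ} (hx : x ∈ gridBox k N j)
    (i : Fin k) : ⌊(N : ℝ) * x i⌋ = (j i : ℤ) := by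
  obtain ⟨h₀, h₁⟩ := mem_gridBox.1 hx i
  rw [Int.floor_eq_iff]; push_cast; constructor <;> linarith

lemma eq_of_mem_gridBox {j j' : Fin k → Fin N} {x : Fin k → ℝ} (hj : x ∈ gridBox k N j)
    (hj' : x ∈ gridBox k N j') : j = j' := by
  funext i
  have := (floor_mul_eq_of_mem_gridBox hj i).symm.trans (floor_mul_eq_of_mem_gridBox hj' i)
  exact Fin.ext (by exact_mod_cast this)

lemma exists_mem_gridBox (hN : 0 < N) {x : Fin k → ℝ} (hx : x ∈ unitCube k) :
    ∃ j : Fin k → Fin N, x ∈ gridBox k N j := by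
  have hbound : ∀ i, ⌊(N : ℝ) * x i⌋.toNat < N := fun i => by
    have : (N : ℝ) * x i < N := by nlinarith [(hx i).2, (show (0:ℝ) < N by exact_mod_cast hN)]
    have := Int.floor_lt.2 (by exact_mod_cast this : (N : ℝ) * x i < ((N : ℤ) : ℝ))
    omega
  refine ⟨fun i => ⟨_, hbound i⟩, fun i => ?_⟩
  have h₀ : 0 ≤ ⌊(N : ℝ) * x i⌋ := Int.floor_nonneg.2 (by nlinarith [(hx i).1])
  have : ((⌊(N : ℝ) * x i⌋.toNat : ℕ) : ℝ) = ⌊(N : ℝ) * x i⌋ := by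
    exact_mod_cast Int.toNat_of_nonneg h₀
  simp only [Pi.sub_apply, Pi.smul_apply, smul_eq_mul, this]
  exact ⟨Int.fract_nonneg _, Int.fract_lt_one _⟩

lemma Tk_eq_of_mem_gridBox {j : Fin k → Fin N} {x : Fin k → ℝ} (hx : x ∈ gridBox k N j) :
    Tk N k x = (N : ℝ) • x - fun i => (j i : ℝ) := by
  funext i
  have h := mem_gridBox.1 hx i
  rw [Tk, ← Int.fract_sub_natCast, Int.fract_eq_self.2 h]
  rfl

lemma preimage_Tk_inter_gridBox (j : Fin k → Fin N) (B : Set (Fin k → ℝ)) :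
    Tk N k ⁻¹' B ∩ gridBox k N j
      = (fun x => (N : ℝ) • x - fun i => (j i : ℝ)) ⁻¹' (B ∩ unitCube k) := by
  ext x
  constructor
  · rintro ⟨hB, hx⟩
    exact ⟨by simpa [Tk_eq_of_mem_gridBox hx] using hB, hx⟩
  · rintro ⟨hB, hx⟩
    exact ⟨by simpa [Tk_eq_of_mem_gridBox hx] using hB, hx⟩

lemma volume_preimage_Tk_inter_gridBox (hN : 0 < N) (j : Fin k → Fin N) (B : Set (Fin k → ℝ)) :
    volume (Tk N k ⁻¹' B ∩ gridBox k N j) = ((N : ℝ≥0∞) ^ k)⁻¹ * volume (B ∩ unitCube k) := by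
  rw [preimage_Tk_inter_gridBox, volume_preimage_smul_sub hN]

end Grid

section GridStep

variable {k N : ℕ}

noncomputable def gridStep (k N : ℕ) (c : (Fin k → Fin N) → ℝ) (x : Fin k → ℝ) : ℝ :=
  ∑ j, (gridBox k N j).indicator (fun _ => c j) x

variable {c : (Fin k → Fin N) → ℝ}

lemma measurable_gridStep : Measurable (gridStep k N c) :=
  Finset.measurable_sum _ fun j _ => measurable_const.indicator (measurableSet_gridBox j)

lemma gridStep_nonneg (hc : ∀ j, 0 ≤ c j) (x : Fin k → ℝ) : 0 ≤ gridStep k N c x :=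
  Finset.sum_nonneg fun j _ => indicator_nonneg (fun _ _ => hc j) x

lemma gridStep_eq_of_mem_gridBox {j : Fin k → Fin N} {x : Fin k → ℝ} (hx : x ∈ gridBox k N j) :
    gridStep k N c x = c j := by
  rw [gridStep, Finset.sum_eq_single_of_mem j (Finset.mem_univ j), indicator_of_mem hx]
  exact fun j' _ hj' => indicator_of_notMem (fun hx' => hj' (eq_of_mem_gridBox hx' hx)) _

lemma gridStep_eq_zero_of_notMem {x : Fin k → ℝ} (hx : x ∉ unitCube k) : gridStep k N c x = 0 :=
  Finset.sum_eq_zero fun j _ => indicator_of_notMem (fun h => hx (gridBox_subset_unitCube j h)) _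

lemma integrable_gridStep (hN : 0 < N) : Integrable (gridStep k N c) :=
  integrable_finsetSum _ fun j _ => (integrableOn_const (by
    rw [volume_gridBox hN]; simp [hN.ne'])).integrable_indicator (measurableSet_gridBox j)

lemma setLIntegral_ofReal_gridStep (hc : ∀ j, 0 ≤ c j) (U : Set (Fin k → ℝ)) :
    ∫⁻ x in U, ENNReal.ofReal (gridStep k N c x)
      = ∑ j, ENNReal.ofReal (c j) * volume (gridBox k N j ∩ U) := by
  have hsum : ∀ x, ENNReal.ofReal (gridStep k N c x)
      = ∑ j, (gridBox k N j).indicator (fun _ => ENNReal.ofReal (c j)) x := fun x => by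
    rw [gridStep, ENNReal.ofReal_sum_of_nonneg fun j _ => indicator_nonneg (fun _ _ => hc j) x]
    refine Finset.sum_congr rfl fun j _ => ?_
    exact (congr_fun (indicator_comp_of_zero (g := ENNReal.ofReal) ENNReal.ofReal_zero) x).symm
  simp only [hsum]
  rw [lintegral_finsetSum _ fun j _ => measurable_const.indicator (measurableSet_gridBox j)]
  refine Finset.sum_congr rfl fun j _ => ?_
  rw [lintegral_indicator_const (measurableSet_gridBox j),
    Measure.restrict_apply (measurableSet_gridBox j)]

lemma map_Tk_withDensity_gridStep (hN : 0 < N) (hc : ∀ j, 0 ≤ c j) :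
    (volume.withDensity fun x => ENNReal.ofReal (gridStep k N c x)).map (Tk N k)
      = (∫⁻ x, ENNReal.ofReal (gridStep k N c x)) • volume.restrict (unitCube k) := by
  ext B hB
  have hB' : MeasurableSet (Tk N k ⁻¹' B) := measurable_Tk hB
  rw [Measure.map_apply measurable_Tk hB, withDensity_apply _ hB',
    setLIntegral_ofReal_gridStep hc, ← setLIntegral_univ,
    setLIntegral_ofReal_gridStep hc univ, Measure.smul_apply, smul_eq_mul,
    Measure.restrict_apply hB, Finset.sum_mul]
  refine Finset.sum_congr rfl fun j _ => ?_
  rw [inter_comm, volume_preimage_Tk_inter_gridBox hN, inter_univ, volume_gridBox hN, mul_assoc]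

lemma ofReal_gridStep_one (hN : 0 < N) :
    (fun x => ENNReal.ofReal (gridStep k N (fun _ => 1) x)) = (unitCube k).indicator 1 := by
  funext x
  by_cases hx : x ∈ unitCube k
  · obtain ⟨j, hj⟩ := exists_mem_gridBox hN hx
    simp [gridStep_eq_of_mem_gridBox hj, hx]
  · simp [gridStep_eq_zero_of_notMem hx, hx]

lemma measurePreserving_Tk (hN : 0 < N) :
    MeasurePreserving (Tk N k) (volume.restrict (unitCube k)) (volume.restrict (unitCube k)) := by
  refine ⟨measurable_Tk, ?_⟩
  have h := map_Tk_withDensity_gridStep (k := k) hN (c := fun _ => 1) fun _ => zero_le_one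
  rwa [ofReal_gridStep_one hN, withDensity_indicator_one measurableSet_unitCube,
    lintegral_indicator_one measurableSet_unitCube, volume_unitCube, one_smul] at h

end GridStep

section Iterates

variable {q k : ℕ}

lemma Tk_Tk (a b : ℕ) (x : Fin k → ℝ) : Tk a k (Tk b k x) = Tk (a * b) k x := by
  funext i
  have hmul : (a : ℝ) * Int.fract ((b : ℝ) * x i)
      = ((a * b : ℕ) : ℝ) * x i - ((a * ⌊(b : ℝ) * x i⌋ : ℤ) : ℝ) := by
    rw [Int.fract]; push_cast; ring
  simp only [Tk, hmul, Int.fract_sub_intCast]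

lemma Tk_iterate_eqOn (n : ℕ) : EqOn (Tk q k)^[n] (Tk (q ^ n) k) (unitCube k) := by
  intro x hx
  induction n with
  | zero =>
    funext i
    simp [Tk, Int.fract_eq_self.2 (hx i)]
  | succ n ih => rw [Function.iterate_succ_apply', ih, Tk_Tk, pow_succ']

lemma map_Tk_iterate_withDensity_gridStep (hq : 0 < q) {m n : ℕ} (hmn : m ≤ n)
    {c : (Fin k → Fin (q ^ m)) → ℝ} (hc : ∀ j, 0 ≤ c j) :
    (volume.withDensity fun x => ENNReal.ofReal (gridStep k (q ^ m) c x)).map (Tk q k)^[n]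
      = (∫⁻ x, ENNReal.ofReal (gridStep k (q ^ m) c x)) • volume.restrict (unitCube k) := by
  obtain ⟨r, rfl⟩ := Nat.exists_eq_add_of_le' hmn
  have hcube : ∀ᵐ x ∂volume.withDensity fun x => ENNReal.ofReal (gridStep k (q ^ m) c x),
      x ∈ unitCube k := by
    rw [ae_withDensity_iff measurable_gridStep.ennreal_ofReal]
    refine Eventually.of_forall fun x hx => ?_
    by_contra h
    exact hx (by rw [gridStep_eq_zero_of_notMem h, ENNReal.ofReal_zero])
  rw [Function.iterate_add, ← Measure.map_map (measurable_Tk.iterate r) (measurable_Tk.iterate m),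
    Measure.map_congr (hcube.mono fun x hx => Tk_iterate_eqOn m hx),
    map_Tk_withDensity_gridStep (pow_pos hq m) hc, Measure.map_smul,
    ((measurePreserving_Tk hq).iterate r).map_eq]

end Iterates

section Approximation

variable {k N : ℕ}

lemma abs_posPart_sub_gridStep_le {h : (Fin k → ℝ) → ℝ} {δ ε : ℝ} (hδ : 0 < δ)
    (hh : ∀ x y, dist x y < δ → dist (h x) (h y) < ε) (hN : δ⁻¹ < N) {x : Fin k → ℝ}
    (hx : x ∈ unitCube k) :
    |max (h x) 0 - gridStep k N (fun j => max (h fun i => j i / N) 0) x| ≤ ε := by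
  have hN0 : (0 : ℝ) < N := (inv_pos.2 hδ).trans hN
  obtain ⟨j, hj⟩ := exists_mem_gridBox (Nat.cast_pos.1 hN0) hx
  rw [gridStep_eq_of_mem_gridBox hj]
  refine (abs_max_sub_max_le_abs _ _ _).trans (le_of_lt ?_)
  refine hh _ _ ((dist_pi_lt_iff hδ).2 fun i => ?_)
  obtain ⟨h₀, h₁⟩ := mem_gridBox.1 hj i
  have hNδ : 1 < N * δ := by rwa [inv_lt_iff_one_lt_mul₀ hδ] at hN
  have hdiff : x i - (j i : ℝ) / N = ((N : ℝ) * x i - j i) / N := by field_simp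
  rw [Real.dist_eq, hdiff, abs_of_nonneg (div_nonneg h₀ hN0.le), div_lt_iff₀ hN0]
  linarith

/-- Approximate `f` in `L¹` by a continuous compactly supported `h`, then sample `max h 0` at
the lower corners of a fine grid. -/
lemma eventually_exists_gridStep_integral_abs_sub_le {f : (Fin k → ℝ) → ℝ} (hf : Integrable f)
    (hf0 : ∀ x, 0 ≤ f x) (hf_cube : ∀ x ∉ unitCube k, f x = 0) {ε : ℝ} (hε : 0 < ε) :
    ∀ᶠ N : ℕ in atTop, ∃ c : (Fin k → Fin N) → ℝ,
      (∀ j, 0 ≤ c j) ∧ ∫ x, |f x - gridStep k N c x| ≤ ε := by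
  obtain ⟨h, hh_supp, hfh, hh_cont, hh_int⟩ :=
    hf.exists_hasCompactSupport_integral_sub_le (half_pos hε)
  obtain ⟨δ, hδ, hhδ⟩ := Metric.uniformContinuous_iff.1
    (hh_supp.uniformContinuous_of_continuous hh_cont) _ (half_pos hε)
  filter_upwards [tendsto_natCast_atTop_atTop.eventually_gt_atTop δ⁻¹] with N hN
  have hN0 : 0 < N := Nat.cast_pos.1 ((inv_pos.2 hδ).trans hN)
  refine ⟨fun j => max (h fun i => j i / N) 0, fun j => le_max_right _ _, ?_⟩
  set g := gridStep k N fun j => max (h fun i => j i / N) 0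
  have hpt : ∀ x, |f x - g x| ≤ ‖f x - h x‖ + (unitCube k).indicator (fun _ => ε / 2) x := by
    intro x
    by_cases hx : x ∈ unitCube k
    · rw [indicator_of_mem hx, Real.norm_eq_abs]
      calc |f x - g x| ≤ |max (f x) 0 - max (h x) 0| + |max (h x) 0 - g x| := by
            rw [max_eq_left (hf0 x)]; exact abs_sub_le _ _ _
        _ ≤ |f x - h x| + ε / 2 :=
            add_le_add (abs_max_sub_max_le_abs _ _ _) (abs_posPart_sub_gridStep_le hδ hhδ hN hx)
    · have hgx : g x = 0 := gridStep_eq_zero_of_notMem hx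
      rw [indicator_of_notMem hx, hf_cube x hx, hgx]
      simp
  have hcube_int : Integrable ((unitCube k).indicator fun _ => ε / 2) :=
    (integrableOn_const (by simp [volume_unitCube])).integrable_indicator measurableSet_unitCube
  calc ∫ x, |f x - g x|
      ≤ ∫ x, (‖f x - h x‖ + (unitCube k).indicator (fun _ => ε / 2) x) :=
        integral_mono (hf.sub (integrable_gridStep hN0)).abs
          ((hf.sub hh_int).norm.add hcube_int) hpt
    _ ≤ ε / 2 + ε / 2 := by
        rw [integral_add (f := fun x => ‖f x - h x‖) (hf.sub hh_int).norm hcube_int,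
          integral_indicator_const _ measurableSet_unitCube, measureReal_def, volume_unitCube]
        simp only [ENNReal.toReal_one, one_smul]
        linarith
    _ = ε := add_halves ε

end Approximation

section Densities

variable {α : Type*} [MeasurableSpace α]

lemma integrable_of_isFiniteMeasure_withDensity_ofReal {μ : Measure α} {f : α → ℝ}
    (hf : Measurable f) (hf0 : ∀ x, 0 ≤ f x)
    [IsFiniteMeasure (μ.withDensity fun x => ENNReal.ofReal (f x))] : Integrable f μ := by
  refine ⟨hf.aestronglyMeasurable, (hasFiniteIntegral_iff_ofReal (Eventually.of_forall hf0)).2 ?_⟩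
  rw [← setLIntegral_univ, ← withDensity_apply _ MeasurableSet.univ]
  exact measure_lt_top _ _

lemma abs_toReal_withDensity_sub_le {μ : Measure α} {f g : α → ℝ} (hf : Integrable f μ)
    (hg : Integrable g μ) (hf0 : ∀ x, 0 ≤ f x) (hg0 : ∀ x, 0 ≤ g x) {s : Set α}
    (hs : MeasurableSet s) :
    |(μ.withDensity (fun x => ENNReal.ofReal (f x)) s).toReal
        - (μ.withDensity (fun x => ENNReal.ofReal (g x)) s).toReal| ≤ ∫ x, |f x - g x| ∂μ := by
  have htoReal : ∀ F : α → ℝ, Integrable F μ → (∀ x, 0 ≤ F x) →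
      (μ.withDensity (fun x => ENNReal.ofReal (F x)) s).toReal = ∫ x in s, F x ∂μ :=
    fun F hF hF0 => by
      rw [withDensity_apply _ hs, ← ofReal_integral_eq_lintegral_ofReal hF.restrict
        (Eventually.of_forall hF0), ENNReal.toReal_ofReal (integral_nonneg hF0)]
  rw [htoReal f hf hf0, htoReal g hg hg0, ← integral_sub hf.restrict hg.restrict]
  exact abs_integral_le_integral_abs.trans
    (setIntegral_le_integral (hf.sub hg).abs (Eventually.of_forall fun _ => abs_nonneg _))

/-- Comparing total masses shows that `κ` is `δ`-close to `1`. -/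
lemma abs_toReal_sub_le_of_eq_smul {ν ν' μ : Measure α} [IsProbabilityMeasure ν]
    [IsProbabilityMeasure μ] {κ : ℝ≥0∞} (hν' : ν' = κ • μ) {δ : ℝ}
    (hδ : ∀ s, MeasurableSet s → |(ν s).toReal - (ν' s).toReal| ≤ δ) {s : Set α}
    (hs : MeasurableSet s) :
    |(ν s).toReal - (μ s).toReal| ≤ 2 * δ := by
  have hν's : ∀ t, (ν' t).toReal = κ.toReal * (μ t).toReal := fun t => by
    rw [hν', Measure.smul_apply, smul_eq_mul, ENNReal.toReal_mul]
  have hmass : |1 - κ.toReal| ≤ δ := by simpa [hν's] using hδ univ MeasurableSet.univ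
  have hμs : (μ s).toReal ≤ 1 := by simpa using ENNReal.toReal_mono ENNReal.one_ne_top prob_le_one
  have hν'μ : |(ν' s).toReal - (μ s).toReal| = |1 - κ.toReal| * (μ s).toReal := by
    rw [hν's, show κ.toReal * (μ s).toReal - (μ s).toReal = -((1 - κ.toReal) * (μ s).toReal) by
      ring, abs_neg, abs_mul, abs_of_nonneg ENNReal.toReal_nonneg]
  calc |(ν s).toReal - (μ s).toReal|
      ≤ |(ν s).toReal - (ν' s).toReal| + |1 - κ.toReal| * (μ s).toReal :=
        hν'μ ▸ abs_sub_le _ _ _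
    _ ≤ δ + δ * 1 := add_le_add (hδ s hs)
        (mul_le_mul hmass hμs ENNReal.toReal_nonneg ((abs_nonneg _).trans hmass))
    _ = 2 * δ := by ring

end Densities

lemma dTVk_nonneg (k : ℕ) (ν₁ ν₂ : Measure (Fin k → ℝ)) : 0 ≤ dTVk k ν₁ ν₂ :=
  Real.iSup_nonneg fun _ => abs_nonneg _

lemma dTVk_le {k : ℕ} {ν₁ ν₂ : Measure (Fin k → ℝ)} {δ : ℝ} (hδ : 0 ≤ δ)
    (h : ∀ A, MeasurableSet A → |(ν₁ A).toReal - (ν₂ A).toReal| ≤ δ) : dTVk k ν₁ ν₂ ≤ δ :=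
  Real.iSup_le (fun A => h A.1 A.2) hδ

theorem stmt18_general
    {Ω : Type*} [MeasurableSpace Ω] (ℙ : Measure Ω) [IsProbabilityMeasure ℙ]
    (q k : ℕ) (hq : 2 ≤ q)
    (f : (Fin k → ℝ) → ℝ) (hf_meas : Measurable f) (hf_nonneg : ∀ x, 0 ≤ f x)
    (hf_supp : ∀ x, x ∉ {y : Fin k → ℝ | ∀ i, y i ∈ Set.Ioo (0:ℝ) 1} → f x = 0)
    (X : Ω → Fin k → ℝ) (hX : Measurable X)
    (hlaw : Measure.map X ℙ = volume.withDensity (fun x => ENNReal.ofReal (f x))) :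
    Tendsto (fun n : ℕ =>
        dTVk k (Measure.map (fun ω => (Tk q k)^[n] (X ω)) ℙ)
          (volume.restrict {y : Fin k → ℝ | ∀ i, y i ∈ Set.Ico (0:ℝ) 1}))
      atTop (nhds 0) := by
  change Tendsto (fun n => dTVk k _ (volume.restrict (unitCube k))) atTop (nhds 0)
  set ν := volume.withDensity fun x => ENNReal.ofReal (f x)
  have hlaw_n : ∀ n, ℙ.map (fun ω => (Tk q k)^[n] (X ω)) = ν.map (Tk q k)^[n] := fun n => by
    rw [← hlaw, Measure.map_map (measurable_Tk.iterate n) hX]; rfl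
  have : IsProbabilityMeasure ν := hlaw ▸ Measure.isProbabilityMeasure_map hX.aemeasurable
  have hf_int : Integrable f := integrable_of_isFiniteMeasure_withDensity_ofReal hf_meas hf_nonneg
  have hf_cube : ∀ x ∉ unitCube k, f x = 0 :=
    fun x hx => hf_supp x fun h => hx fun i => Ioo_subset_Ico_self (h i)
  refine Metric.tendsto_atTop.2 fun ε hε => ?_
  obtain ⟨m, c, hc, hfg⟩ := ((tendsto_pow_atTop_atTop_of_one_lt hq).eventually
    (eventually_exists_gridStep_integral_abs_sub_le hf_int hf_nonneg hf_cube
      (by positivity : 0 < ε / 3))).exists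
  refine ⟨m, fun n hn => ?_⟩
  have hg_int := integrable_gridStep (c := c) (pow_pos (by omega) m)
  have : IsProbabilityMeasure (ν.map (Tk q k)^[n]) :=
    Measure.isProbabilityMeasure_map (measurable_Tk.iterate n).aemeasurable
  have hbound : dTVk k (ν.map (Tk q k)^[n]) (volume.restrict (unitCube k)) ≤ 2 * (ε / 3) := by
    refine dTVk_le (by positivity) fun A hA => abs_toReal_sub_le_of_eq_smul
      (map_Tk_iterate_withDensity_gridStep (by omega) hn hc) (fun s hs => ?_) hA
    rw [Measure.map_apply (measurable_Tk.iterate n) hs,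
      Measure.map_apply (measurable_Tk.iterate n) hs]
    exact (abs_toReal_withDensity_sub_le hf_int hg_int hf_nonneg (gridStep_nonneg hc)
      (measurable_Tk.iterate n hs)).trans hfg
  rw [hlaw_n, Real.dist_eq, sub_zero, abs_of_nonneg (dTVk_nonneg _ _ _)]
  linarith

theorem stmt18
    {Ω : Type*} [MeasurableSpace Ω] (ℙ : Measure Ω) [IsProbabilityMeasure ℙ]
    (q k : ℕ) (hq : 2 ≤ q) (hk : 1 ≤ k)
    (f : (Fin k → ℝ) → ℝ) (hf_meas : Measurable f) (hf_nonneg : ∀ x, 0 ≤ f x)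
    (hf_supp : ∀ x, x ∉ {y : Fin k → ℝ | ∀ i, y i ∈ Set.Ioo (0:ℝ) 1} → f x = 0)
    (X : Ω → Fin k → ℝ) (hX : Measurable X)
    (hXrange : ∀ ω, ∀ i, X ω i ∈ Set.Ico (0:ℝ) 1)
    (hlaw : Measure.map X ℙ = volume.withDensity (fun x => ENNReal.ofReal (f x))) :
    Tendsto (fun n : ℕ =>
        dTVk k (Measure.map (fun ω => (Tk q k)^[n] (X ω)) ℙ)
          (volume.restrict {y : Fin k → ℝ | ∀ i, y i ∈ Set.Ico (0:ℝ) 1}))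
      atTop (nhds 0) :=
  stmt18_general ℙ q k hq f hf_meas hf_nonneg hf_supp X hX hlaw
end

section
/- Let q ≥ 2 and k ≥ 1 be integers and let f be a probability density function on (0,1)^k with ‖f‖_∞ = sup_{(0,1)^k} |f| < ∞ which is continuous on (0,1)^k except at finitely many points. Then sup_{x ∈ (0,1)^k} |f_n(x) − 1| → 0 as n → ∞, where f_n(x) = q^{−nk} Σ_{j ∈ {0,…,q^n−1}^k} f(q^{−n}(j + x)) is the density of T^n(X) when X has density f and T is applied coordinatewise. -/
/-!
With `N = q ^ n`, `f_n(x)` is a Riemann sum of `f` over the grid of cubes of side `1 / N` in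
`[0, 1]^k`, the cube with lower corner `j / N` being tagged at `(j + x) / N`. A bounded function
that is continuous off a null set (here finitely many points and the boundary of the cube) is
Riemann integrable, and Riemann integrability bounds the error of every tagged partition of small
mesh, whatever its tags. So the Riemann sums converge to `∫ f = 1` uniformly in `x`.
-/

open MeasureTheory Set Filter

/-- `f_n(x) = q^{−nk} Σ_{j ∈ {0,…,q^n−1}^k} f(q^{−n}(j+x))`, the density of
`T^n(X)` when `X` has density `f` and `T` is applied coordinatewise. -/
noncomputable def fIterk (q k : ℕ) (f : (Fin k → ℝ) → ℝ) (n : ℕ) (x : Fin k → ℝ) : ℝ :=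
  (q : ℝ) ^ (-(n * k : ℤ)) *
    ∑ j : Fin k → Fin (q ^ n), f (fun i => ((j i : ℝ) + x i) / (q : ℝ) ^ n)

namespace BoxIntegral

variable {ι E F : Type*} [NormedAddCommGroup E] [NormedSpace ℝ E]
  [NormedAddCommGroup F] [NormedSpace ℝ F]

open scoped Classical in
noncomputable def TaggedPrepartition.retag {I : Box ι} (π : TaggedPrepartition I)
    (t : Box ι → ι → ℝ) (ht : ∀ J ∈ π, t J ∈ Box.Icc J) : TaggedPrepartition I where
  toPrepartition := π.toPrepartition
  tag := π.boxes.piecewise t π.tag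
  tag_mem_Icc J := by
    by_cases hJ : J ∈ π.boxes
    · rw [Finset.piecewise_eq_of_mem _ _ _ hJ]
      exact Box.le_iff_Icc.1 (π.le_of_mem hJ) (ht J hJ)
    · rw [Finset.piecewise_eq_of_notMem _ _ _ hJ]
      exact π.tag_mem_Icc J

namespace TaggedPrepartition

variable {I J : Box ι} (π : TaggedPrepartition I) {t : Box ι → ι → ℝ}
  (ht : ∀ J ∈ π, t J ∈ Box.Icc J)

theorem retag_tag_of_mem (hJ : J ∈ π) : (π.retag t ht).tag J = t J := by
  classical
  exact Finset.piecewise_eq_of_mem _ _ _ hJ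

theorem isHenstock_retag : (π.retag t ht).IsHenstock := fun J hJ ↦
  (π.retag_tag_of_mem ht hJ).symm ▸ ht J hJ

theorem integralSum_retag (f : (ι → ℝ) → E) (vol : ι →ᵇᵃ E →L[ℝ] F) :
    integralSum f vol (π.retag t ht) = ∑ J ∈ π.boxes, vol J (f (t J)) :=
  Finset.sum_congr rfl fun J hJ ↦ by rw [π.retag_tag_of_mem ht hJ]

end TaggedPrepartition

variable (ι) in
def Box.unitCube : Box ι where
  lower := 0
  upper := 1
  lower_lt_upper _ := zero_lt_one

theorem hasIntegralVertices_unitCube : hasIntegralVertices (Box.unitCube ι) :=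
  ⟨0, 1, fun _ ↦ by simp [Box.unitCube], fun _ ↦ by simp [Box.unitCube]⟩

namespace unitPartition

variable {n : ℕ} [NeZero n]

theorem lower_add_mem_Icc (ν : ι → ℤ) {x : ι → ℝ} (hx : x ∈ Icc 0 1) :
    (fun i ↦ (box n ν).lower i + x i / n) ∈ Box.Icc (box n ν) := by
  have hn : (0 : ℝ) < n := Nat.cast_pos.mpr n.pos_of_neZero
  refine ⟨fun i ↦ ?_, fun i ↦ ?_⟩
  · simpa using div_nonneg (hx.1 i) hn.le
  · simp only [box_lower, box_upper, add_div]
    gcongr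
    exact hx.2 i

variable [Fintype ι]

theorem Icc_subset_closedBall {B J : Box ι} (hJ : J ∈ prepartition n B) {y : ι → ℝ}
    (hy : y ∈ Box.Icc J) {r : ℝ} (hr : 1 / n ≤ r) : Box.Icc J ⊆ Metric.closedBall y r := by
  obtain ⟨ν, -, rfl⟩ := mem_prepartition_iff.mp hJ
  exact fun z hz ↦
    (Metric.dist_le_diam_of_mem (Box.isBounded_Icc _) hz hy).trans ((diam_boxIcc n ν).trans hr)

theorem mem_admissibleIndex_unitCube {ν : ι → ℤ} :
    ν ∈ admissibleIndex n (Box.unitCube ι) ↔ ∀ i, 0 ≤ ν i ∧ ν i < n := by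
  have hn : (0 : ℝ) < n := Nat.cast_pos.mpr n.pos_of_neZero
  simp only [mem_admissibleIndex_iff, Box.le_iff_bounds, Box.unitCube, box_lower, box_upper,
    Pi.le_def, ← forall_and]
  refine forall_congr' fun i ↦ ?_
  have hlt : (ν i : ℝ) + 1 ≤ n ↔ ν i < n := by
    rw [← Int.add_one_le_iff]; exact_mod_cast Iff.rfl
  rw [Pi.zero_apply, Pi.one_apply, le_div_iff₀ hn, div_le_one hn, zero_mul, hlt,
    Int.cast_nonneg_iff]

theorem sum_prepartition_unitCube [DecidableEq ι] {M : Type*} [AddCommMonoid M]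
    (g : Box ι → M) :
    ∑ J ∈ (prepartition n (Box.unitCube ι)).boxes, g J =
      ∑ j : ι → Fin n, g (box n fun i ↦ j i) := by
  symm
  refine Finset.sum_nbij (fun j ↦ box n fun i ↦ (j i : ℤ)) (fun j _ ↦ ?_) ?_ ?_ (fun _ _ ↦ rfl)
  · exact mem_prepartition_boxes_iff.mpr
      ⟨_, mem_admissibleIndex_unitCube.mpr fun i ↦ ⟨by positivity, by simp⟩, rfl⟩
  · intro j _ j' _ h
    funext i
    exact Fin.ext (by exact_mod_cast congrFun (box_injective n h) i)
  · intro J hJ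
    obtain ⟨ν, hν, rfl⟩ := mem_prepartition_boxes_iff.mp hJ
    have hν := mem_admissibleIndex_unitCube.mp hν
    refine ⟨fun i ↦ ⟨(ν i).toNat, by have := hν i; omega⟩,
      Finset.mem_coe.2 (Finset.mem_univ _), ?_⟩
    show box n _ = box n ν
    congr 1
    funext i
    simp [(hν i).1]

end unitPartition

open unitPartition

variable [Fintype ι]

theorem HasIntegral.eventually_dist_sum_unitPartition_le {B : Box ι}
    (hB : hasIntegralVertices B) {f : (ι → ℝ) → E} {vol : ι →ᵇᵃ E →L[ℝ] F} {y : F}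
    (h : HasIntegral B IntegrationParams.Riemann f vol y) {ε : ℝ} (hε : 0 < ε) :
    ∀ᶠ n in atTop, ∀ [NeZero n] (t : Box ι → ι → ℝ),
      (∀ J ∈ prepartition n B, t J ∈ Box.Icc J) →
        dist (∑ J ∈ (prepartition n B).boxes, vol J (f (t J))) y ≤ ε := by
  obtain ⟨r, hr, hπ⟩ := hasIntegral_iff.mp h ε hε
  -- Riemann gauges are constant, so the one mesh bound `r 0 0` serves every choice of tags
  have hρ : (0 : ℝ) < r 0 0 := (r 0 0).2
  filter_upwards [tendsto_one_div_atTop_nhds_zero_nat.eventually (gt_mem_nhds hρ)]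
    with n hn _ t ht
  rw [← (prepartition n B).integralSum_retag ht]
  refine hπ 0 _ ⟨fun J hJ ↦ ?_, fun _ ↦ (prepartition n B).isHenstock_retag ht,
    fun h ↦ absurd h Bool.false_ne_true, fun h ↦ absurd h Bool.false_ne_true⟩
    (prepartition_isPartition n hB)
  rw [TaggedPrepartition.retag_tag_of_mem _ ht hJ, hr 0 rfl]
  exact Icc_subset_closedBall hJ (ht J hJ) hn.le

theorem HasIntegral.eventually_dist_riemannSum_unitCube_le [DecidableEq ι] [CompleteSpace E]
    {f : (ι → ℝ) → E} {y : E}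
    (h : HasIntegral (Box.unitCube ι) IntegrationParams.Riemann f
      (volume : Measure (ι → ℝ)).toBoxAdditive.toSMul y) {ε : ℝ} (hε : 0 < ε) :
    ∀ᶠ n : ℕ in atTop, ∀ x ∈ Icc (0 : ι → ℝ) 1,
      dist (((n : ℝ) ^ Fintype.card ι)⁻¹ • ∑ j : ι → Fin n, f fun i ↦ (j i + x i) / n) y ≤ ε := by
  filter_upwards [h.eventually_dist_sum_unitPartition_le hasIntegralVertices_unitCube hε,
    eventually_gt_atTop 0] with n hn hn0 x hx
  have : NeZero n := ⟨hn0.ne'⟩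
  have hsum := hn (fun J i ↦ J.lower i + x i / n) fun J hJ ↦ by
    obtain ⟨ν, -, rfl⟩ := mem_prepartition_iff.mp hJ
    exact lower_add_mem_Icc ν hx
  rw [sum_prepartition_unitCube] at hsum
  convert hsum using 2
  rw [Finset.smul_sum]
  refine Finset.sum_congr rfl fun j _ ↦ ?_
  simp [BoxAdditiveMap.toSMul_apply, Measure.toBoxAdditive_apply, Measure.real, add_div]

end BoxIntegral

open BoxIntegral

theorem ae_continuousAt_of_eqOn_compl_zero {X Y : Type*} [TopologicalSpace X] [MeasurableSpace X]
    [TopologicalSpace Y] [Zero Y] {μ : Measure X} {f : X → Y} {s T : Set X} (hs : IsOpen s)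
    (hf : EqOn f 0 sᶜ) (hs_front : μ (frontier s) = 0) (hT : μ T = 0)
    (hcont : ∀ x ∈ s, x ∉ T → ContinuousAt f x) : ∀ᵐ x ∂μ, ContinuousAt f x := by
  filter_upwards [measure_eq_zero_iff_ae_notMem.mp hs_front, measure_eq_zero_iff_ae_notMem.mp hT]
    with x hx_front hxT
  by_cases hx : x ∈ s
  · exact hcont x hx hxT
  have hx_ext : (closure s)ᶜ ∈ nhds x := isClosed_closure.isOpen_compl.mem_nhds
    fun h ↦ hx_front ⟨h, by rwa [hs.interior_eq]⟩
  refine ContinuousAt.congr (f := fun _ ↦ (0 : Y)) continuousAt_const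
    (mem_of_superset hx_ext fun z hz ↦ ?_)
  exact (hf fun h ↦ hz (subset_closure h)).symm

theorem hasIntegral_riemann_unitCube {ι : Type*} [Fintype ι] [Nonempty ι]
    {f : (ι → ℝ) → ℝ}
    (hf_supp : ∀ x, x ∉ {y : ι → ℝ | ∀ i, y i ∈ Ioo (0 : ℝ) 1} → f x = 0)
    (hf_pdf : ∫ x in {y : ι → ℝ | ∀ i, y i ∈ Ioo (0 : ℝ) 1}, f x = 1)
    (hbdd : BddAbove ((fun x ↦ |f x|) '' {y : ι → ℝ | ∀ i, y i ∈ Ioo (0 : ℝ) 1}))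
    (hcont : ∃ S : Finset (ι → ℝ),
      ∀ x ∈ {y : ι → ℝ | ∀ i, y i ∈ Ioo (0 : ℝ) 1}, x ∉ S → ContinuousAt f x) :
    HasIntegral (Box.unitCube ι) IntegrationParams.Riemann f
      (volume : Measure (ι → ℝ)).toBoxAdditive.toSMul 1 := by
  set C := {y : ι → ℝ | ∀ i, y i ∈ Ioo (0 : ℝ) 1}
  have hC : C = univ.pi fun _ ↦ Ioo 0 1 := by ext; simp [C]
  obtain ⟨S, hS⟩ := hcont
  obtain ⟨M, hM⟩ := hbdd
  have hbound : ∀ x, ‖f x‖ ≤ max M 0 := fun x ↦ by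
    by_cases hx : x ∈ C
    · exact (hM ⟨x, hx, rfl⟩).trans (le_max_left _ _)
    · simp [hf_supp x hx]
  have hae : ∀ᵐ x, ContinuousAt f x := by
    refine ae_continuousAt_of_eqOn_compl_zero (s := C) (T := S) ?_ hf_supp ?_ (S.measure_zero _) hS
    · rw [hC]; exact isOpen_set_pi finite_univ fun _ _ ↦ isOpen_Ioo
    · rw [hC]; exact (convex_pi fun _ _ ↦ convex_Ioo 0 1).addHaar_frontier _
  convert AEContinuous.hasBoxIntegral volume ⟨_, fun x _ ↦ hbound x⟩ hae _
  rw [← hf_pdf]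
  refine (setIntegral_eq_of_subset_of_forall_sdiff_eq_zero (Box.measurableSet_coe _)
    (fun y hy i ↦ ⟨(hy i).1, (hy i).2.le⟩) fun y hy ↦ hf_supp y hy.2).symm

theorem fIterk_eq_smul_sum (q k : ℕ) (f : (Fin k → ℝ) → ℝ) (n : ℕ) (x : Fin k → ℝ) :
    fIterk q k f n x = ((((q ^ n : ℕ) : ℝ)) ^ Fintype.card (Fin k))⁻¹ •
      ∑ j : Fin k → Fin (q ^ n), f fun i ↦ (j i + x i) / (q ^ n : ℕ) := by
  rw [fIterk, Fintype.card_fin, smul_eq_mul, Nat.cast_pow, ← pow_mul, zpow_neg, ← Nat.cast_mul,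
    zpow_natCast]

theorem stmt19_general
    (q k : ℕ) (hq : 2 ≤ q) (hk : 1 ≤ k)
    (f : (Fin k → ℝ) → ℝ)
    (hf_supp : ∀ x, x ∉ {y : Fin k → ℝ | ∀ i, y i ∈ Set.Ioo (0:ℝ) 1} → f x = 0)
    (hf_pdf : ∫ x in {y : Fin k → ℝ | ∀ i, y i ∈ Set.Ioo (0:ℝ) 1}, f x = 1)
    -- `‖f‖_∞ < ∞`
    (hbdd : BddAbove ((fun x => |f x|) '' {y : Fin k → ℝ | ∀ i, y i ∈ Set.Ioo (0:ℝ) 1}))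
    -- `f` is continuous on `(0,1)^k` except at finitely many points
    (hcont : ∃ S : Finset (Fin k → ℝ),
      ∀ x ∈ {y : Fin k → ℝ | ∀ i, y i ∈ Set.Ioo (0:ℝ) 1}, x ∉ S → ContinuousAt f x) :
    TendstoUniformlyOn (fun n x => fIterk q k f n x) (fun _ => 1) atTop
      {y : Fin k → ℝ | ∀ i, y i ∈ Set.Ioo (0:ℝ) 1} := by
  have : Nonempty (Fin k) := ⟨⟨0, hk⟩⟩
  have hf := hasIntegral_riemann_unitCube hf_supp hf_pdf hbdd hcont
  have hN : Tendsto (fun n ↦ q ^ n) atTop atTop := tendsto_pow_atTop_atTop_of_one_lt hq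
  refine Metric.tendstoUniformlyOn_iff.mpr fun ε hε ↦ ?_
  filter_upwards [hN.eventually (hf.eventually_dist_riemannSum_unitCube_le (half_pos hε))]
    with n hn x hx
  rw [dist_comm, fIterk_eq_smul_sum]
  exact (hn x ⟨fun i ↦ (hx i).1.le, fun i ↦ (hx i).2.le⟩).trans_lt (half_lt_self hε)

theorem stmt19
    (q k : ℕ) (hq : 2 ≤ q) (hk : 1 ≤ k)
    (f : (Fin k → ℝ) → ℝ) (hf_meas : Measurable f) (hf_nonneg : ∀ x, 0 ≤ f x)
    (hf_supp : ∀ x, x ∉ {y : Fin k → ℝ | ∀ i, y i ∈ Set.Ioo (0:ℝ) 1} → f x = 0)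
    (hf_pdf : ∫ x in {y : Fin k → ℝ | ∀ i, y i ∈ Set.Ioo (0:ℝ) 1}, f x = 1)
    -- `‖f‖_∞ < ∞`
    (hbdd : BddAbove ((fun x => |f x|) '' {y : Fin k → ℝ | ∀ i, y i ∈ Set.Ioo (0:ℝ) 1}))
    -- `f` is continuous on `(0,1)^k` except at finitely many points
    (hcont : ∃ S : Finset (Fin k → ℝ),
      ∀ x ∈ {y : Fin k → ℝ | ∀ i, y i ∈ Set.Ioo (0:ℝ) 1}, x ∉ S → ContinuousAt f x) :
    TendstoUniformlyOn (fun n x => fIterk q k f n x) (fun _ => 1) atTop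
      {y : Fin k → ℝ | ∀ i, y i ∈ Set.Ioo (0:ℝ) 1} :=
  stmt19_general q k hq hk f hf_supp hf_pdf hbdd hcont
end
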